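/- arXiv:1909.05591 — 7 statements merged into one kernel-verified Lean document; each statement's English description precedes it below -/
import Mathlib

section
/- The effective domain of the convex conjugate E* of the surplus function E coincides with the standard simplex, i.e. {p ∈ ℝⁿ : E*(p) < ∞} = Δ. -/
open MeasureTheory

private lemma integrable_sup'_aux {α ι : Type*} [MeasurableSpace α] {μ : Measure α}
    {f : ι → α → ℝ} (hf : ∀ i, Integrable (f i) μ) (s : Finset ι) (hs : s.Nonempty) :
    Integrable (fun x => s.sup' hs fun i => f i x) μ := by
  induction hs using Finset.Nonempty.cons_induction with
  | singleton a => simpa using hf a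
  | cons a s ha hs ih =>
      simp only [Finset.sup'_cons hs]
      exact (hf a).sup ih

private lemma integrable_ciSup_aux {α ι : Type*} [Fintype ι] [Nonempty ι]
    [MeasurableSpace α] {μ : Measure α} {f : ι → α → ℝ} (hf : ∀ i, Integrable (f i) μ) :
    Integrable (fun x => ⨆ i, f i x) μ := by
  have h : (fun x => ⨆ i, f i x)
      = fun x => Finset.univ.sup' Finset.univ_nonempty fun i => f i x := by
    ext x
    exact (Finset.sup'_univ_eq_ciSup fun i => f i x).symm
  rw [h]
  exact integrable_sup'_aux hf _ _

private lemma ereal_eq_top_of_forall {x : EReal} (h : ∀ r : ℝ, (r : EReal) ≤ x) : x = ⊤ := by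
  induction x using EReal.rec with
  | top => rfl
  | bot => exact absurd (h 0) (by simp)
  | coe r =>
      have := h (r + 1)
      rw [EReal.coe_le_coe_iff] at this
      linarith

/-- The effective domain of the convex conjugate `E*` of the surplus
function `E` coincides with the standard simplex `Δ`. -/
theorem domain_conjugate_eq_simplex
    (n : ℕ) (hn : 2 ≤ n)
    (μ : Measure (Fin n → ℝ)) [IsProbabilityMeasure μ]
    (hint : ∀ i : Fin n, Integrable (fun x : Fin n → ℝ => x i) μ)
    (E : (Fin n → ℝ) → ℝ)
    (hE : ∀ u : Fin n → ℝ, E u = ∫ x, (⨆ i : Fin n, (u i + x i)) ∂μ)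
    (Estar : (Fin n → ℝ) → EReal)
    (hEstar : ∀ p : Fin n → ℝ,
      Estar p = ⨆ u : Fin n → ℝ, ((∑ i, p i * u i - E u : ℝ) : EReal)) :
    {p : Fin n → ℝ | Estar p < ⊤}
      = {p : Fin n → ℝ | ∑ i, p i = 1 ∧ ∀ i, 0 ≤ p i} := by
  have hne : Nonempty (Fin n) := ⟨⟨0, by omega⟩⟩
  set m : Fin n → ℝ := fun i => ∫ x, x i ∂μ with hm
  -- integrability of the sup
  have hintsup : ∀ u : Fin n → ℝ, Integrable (fun x => ⨆ i, (u i + x i)) μ := by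
    intro u
    exact integrable_ciSup_aux fun i => (integrable_const (u i)).add (hint i)
  -- each term integrable
  have hterm : ∀ (u : Fin n → ℝ) (i : Fin n),
      Integrable (fun x : Fin n → ℝ => u i + x i) μ :=
    fun u i => (integrable_const (u i)).add (hint i)
  have hterm_int : ∀ (u : Fin n → ℝ) (i : Fin n),
      ∫ x, (u i + x i) ∂μ = u i + m i := by
    intro u i
    rw [integral_add (integrable_const _) (hint i), integral_const]
    simp [hm]
  ext p
  simp only [Set.mem_setOf_eq]
  constructor
  · -- contrapositive: p ∉ Δ → Estar p = ⊤
    intro hlt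
    by_contra hΔ
    have htop : Estar p = ⊤ := by
      rw [hEstar]
      apply ereal_eq_top_of_forall
      intro r
      push_neg at hΔ
      by_cases hsum : ∑ i, p i = 1
      · -- then some p j < 0
        obtain ⟨j, hj⟩ : ∃ j, p j < 0 := hΔ hsum
        -- take u = -t e_j
        set t : ℝ := max 0 ((r + E 0) / (-p j)) with ht
        have ht0 : 0 ≤ t := le_max_left _ _
        set u : Fin n → ℝ := fun i => if i = j then -t else 0 with hu
        have hle : E u ≤ E 0 := by
          rw [hE, hE]
          apply integral_mono (hintsup u) (hintsup 0)
          intro x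
          apply ciSup_le
          intro i
          refine le_ciSup_of_le (Set.Finite.bddAbove (Set.finite_range _)) i ?_
          show u i + x i ≤ (0 : Fin n → ℝ) i + x i
          simp only [hu, Pi.zero_apply]
          split <;> linarith
        have hsumu : ∑ i, p i * u i = t * (-p j) := by
          rw [hu]
          rw [Finset.sum_eq_single j]
          · simp; ring
          · intro i _ hij; simp [hij]
          · simp
        have hr : r ≤ ∑ i, p i * u i - E u := by
          have h1 : r + E 0 ≤ t * (-p j) := by
            have h2 : (r + E 0) / (-p j) ≤ t := le_max_right _ _
            calc r + E 0 = ((r + E 0) / (-p j)) * (-p j) :=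
                  (div_mul_cancel₀ _ (by linarith : (-p j) ≠ 0)).symm
              _ ≤ t * (-p j) := by
                  apply mul_le_mul_of_nonneg_right h2; linarith
          rw [hsumu]; linarith
        exact le_iSup_of_le u (by exact_mod_cast hr)
      · -- constants: u = c • 1
        set E0 : ℝ := ∫ x, (⨆ i, x i) ∂μ with hE0
        set c : ℝ := (r + E0) / (∑ i, p i - 1) with hc
        set u : Fin n → ℝ := fun _ => c with hu
        have hEc : E u = c + E0 := by
          rw [hE]
          have : ∀ x : Fin n → ℝ, (⨆ i, (u i + x i)) = c + ⨆ i, x i := by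
            intro x
            apply le_antisymm
            · apply ciSup_le
              intro i
              simp only [hu]
              exact add_le_add_right (le_ciSup (Set.Finite.bddAbove (Set.finite_range _)) i) c
            · have h2 : (⨆ i, x i) ≤ (⨆ i, u i + x i) - c := by
                apply ciSup_le
                intro i
                have h1 : u i + x i ≤ ⨆ j, u j + x j :=
                  le_ciSup (f := fun j => u j + x j)
                    (Set.Finite.bddAbove (Set.finite_range _)) i
                simp only [hu] at h1 ⊢
                linarith
              linarith
          simp_rw [this]
          rw [integral_add (integrable_const _) ?_, integral_const]
          · simp [hE0]
          · exact integrable_ciSup_aux fun i => hint i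
        have hval : ∑ i, p i * u i - E u = c * (∑ i, p i - 1) - E0 := by
          rw [hEc]; simp only [hu]
          rw [← Finset.sum_mul]
          ring
        have hcc : c * (∑ i, p i - 1) = r + E0 :=
          div_mul_cancel₀ _ (sub_ne_zero.mpr hsum)
        have : r ≤ ∑ i, p i * u i - E u := by rw [hval, hcc]; linarith
        exact le_iSup_of_le u (by exact_mod_cast this)
    rw [htop] at hlt
    exact lt_irrefl _ hlt
  · rintro ⟨hsum, hpos⟩
    rw [hEstar]
    have hbound : ∀ u : Fin n → ℝ, ∑ i, p i * u i - E u ≤ -∑ i, p i * m i := by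
      intro u
      have hEge : ∑ i, p i * u i + ∑ i, p i * m i ≤ E u := by
        rw [hE]
        have hpt : ∀ x : Fin n → ℝ,
            ∑ i, p i * (u i + x i) ≤ ⨆ i, (u i + x i) := by
          intro x
          calc ∑ i, p i * (u i + x i)
              ≤ ∑ i, p i * (⨆ j, (u j + x j)) := by
                apply Finset.sum_le_sum
                intro i _
                exact mul_le_mul_of_nonneg_left
                  (le_ciSup (f := fun j => u j + x j)
                    (Set.Finite.bddAbove (Set.finite_range _)) i) (hpos i)
            _ = (⨆ j, (u j + x j)) := by rw [← Finset.sum_mul, hsum, one_mul]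
        have hint' : ∫ x, (∑ i, p i * (u i + x i)) ∂μ
            = ∑ i, p i * u i + ∑ i, p i * m i := by
          rw [integral_finset_sum _ (fun i _ => ((hterm u i).const_mul (p i)))]
          have : ∀ i ∈ Finset.univ, ∫ x, p i * (u i + x i) ∂μ = p i * u i + p i * m i := by
            intro i _
            rw [integral_const_mul, hterm_int u i]
            ring
          rw [Finset.sum_congr rfl this, Finset.sum_add_distrib]
        rw [← hint']
        exact integral_mono
          (integrable_finset_sum _ fun i _ => (hterm u i).const_mul (p i))
          (hintsup u) hpt
      linarith
    have : (⨆ u : Fin n → ℝ, ((∑ i, p i * u i - E u : ℝ) : EReal))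
        ≤ ((-∑ i, p i * m i : ℝ) : EReal) := by
      apply iSup_le
      intro u
      exact_mod_cast hbound u
    exact lt_of_le_of_lt this (EReal.coe_lt_top _)
end

section
/- The restriction of the convex conjugate E* of the surplus function E to the standard simplex Δ is a continuous (real-valued) function on Δ. -/
open MeasureTheory

/-- The restriction of the convex conjugate `E*` of the surplus function `E`
to the standard simplex `Δ` is a continuous real-valued function on `Δ`. -/
theorem conjugate_continuousOn_simplex
    (n : ℕ) (hn : 2 ≤ n)
    (μ : Measure (Fin n → ℝ)) [IsProbabilityMeasure μ]
    (hint : ∀ i : Fin n, Integrable (fun x : Fin n → ℝ => x i) μ)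
    (E : (Fin n → ℝ) → ℝ)
    (hE : ∀ u : Fin n → ℝ, E u = ∫ x, (⨆ i : Fin n, (u i + x i)) ∂μ)
    (Estar : (Fin n → ℝ) → ℝ)
    (hEstar : ∀ p : Fin n → ℝ,
      Estar p = sSup {y : ℝ | ∃ u : Fin n → ℝ, y = ∑ i, p i * u i - E u}) :
    ContinuousOn Estar {p : Fin n → ℝ | ∑ i, p i = 1 ∧ ∀ i, 0 ≤ p i} := by
  have hnpos : 0 < n := lt_of_lt_of_le (by norm_num) hn
  haveI : Nonempty (Fin n) := Fin.pos_iff_nonempty.mp hnpos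
  set Δ : Set (Fin n → ℝ) := {p | ∑ i, p i = 1 ∧ ∀ i, 0 ≤ p i} with hΔdef
  set m : Fin n → ℝ := fun i => ∫ x, x i ∂μ with hm
  have hbddR : ∀ (g : Fin n → ℝ), BddAbove (Set.range g) :=
    fun g => (Set.finite_range g).bddAbove
  have hFint : ∀ u : Fin n → ℝ, Integrable (fun x : Fin n → ℝ => ⨆ i, (u i + x i)) μ := by
    intro u
    have hcont : Continuous (fun x : Fin n → ℝ => ⨆ i, (u i + x i)) := by
      have heq : (fun x : Fin n → ℝ => ⨆ i, (u i + x i))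
          = fun x => Finset.univ.sup' Finset.univ_nonempty (fun i => u i + x i) := by
        funext x; rw [Finset.sup'_univ_eq_ciSup]
      rw [heq]
      exact Continuous.finset_sup'_apply Finset.univ_nonempty
        (fun i _ => continuous_const.add (continuous_apply i))
    have hgint : Integrable (fun x : Fin n → ℝ => ∑ i, |u i + x i|) μ := by
      apply integrable_finset_sum
      intro i _
      exact ((integrable_const (u i)).add (hint i)).abs
    refine hgint.mono' hcont.aestronglyMeasurable ?_
    filter_upwards with x
    rw [Real.norm_eq_abs, abs_le]
    constructor
    · obtain ⟨i0⟩ := (inferInstance : Nonempty (Fin n))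
      have h1 : -(∑ i, |u i + x i|) ≤ u i0 + x i0 := by
        have h2 := Finset.single_le_sum (f := fun i => |u i + x i|)
          (fun j _ => abs_nonneg _) (Finset.mem_univ i0)
        have h3 := neg_abs_le (u i0 + x i0)
        linarith
      exact h1.trans (le_ciSup (f := fun j => u j + x j) (hbddR _) i0)
    · refine ciSup_le fun i => (le_abs_self _).trans ?_
      exact Finset.single_le_sum (f := fun i => |u i + x i|) (fun j _ => abs_nonneg _)
        (Finset.mem_univ i)
  have hEmono : ∀ (u : Fin n → ℝ) (i : Fin n), u i + m i ≤ E u := by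
    intro u i
    rw [hE]
    have h1 : Integrable (fun x : Fin n → ℝ => u i + x i) μ :=
      (integrable_const (u i)).add (hint i)
    have h2 : ∫ x, (u i + x i) ∂μ ≤ ∫ x, (⨆ j, (u j + x j)) ∂μ :=
      integral_mono h1 (hFint u) (fun x => le_ciSup (f := fun j => u j + x j) (hbddR _) i)
    have h3 : ∫ x, (u i + x i) ∂μ = u i + m i := by
      rw [integral_add (integrable_const (u i)) (hint i)]
      simp [hm]
    linarith
  set M : ℝ := Finset.univ.sup' Finset.univ_nonempty (fun i => -m i) with hM
  -- upper bound for all elements of the defining set, for p in the simplex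
  have hub : ∀ p ∈ Δ, ∀ u : Fin n → ℝ, ∑ i, p i * u i - E u ≤ M := by
    intro p hp u
    obtain ⟨hps, hpn⟩ := hp
    have h1 : ∑ i, p i * u i ≤ ∑ i, p i * (E u - m i) :=
      Finset.sum_le_sum fun i _ =>
        mul_le_mul_of_nonneg_left (by have := hEmono u i; linarith) (hpn i)
    have h2 : ∑ i, p i * (E u - m i) = E u - ∑ i, p i * m i := by
      simp only [mul_sub, Finset.sum_sub_distrib, ← Finset.sum_mul, hps, one_mul]
    have h3 : -∑ i, p i * m i ≤ M := by
      have h4 : ∑ i, p i * (-m i) ≤ ∑ i, p i * M :=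
        Finset.sum_le_sum fun i _ =>
          mul_le_mul_of_nonneg_left (Finset.le_sup' (fun j => -m j) (Finset.mem_univ i)) (hpn i)
      have h5 : ∑ i, p i * M = M := by rw [← Finset.sum_mul, hps, one_mul]
      have h6 : ∑ i, p i * (-m i) = -∑ i, p i * m i := by
        simp [mul_neg, Finset.sum_neg_distrib]
      linarith
    linarith
  have hSne : ∀ p : Fin n → ℝ,
      Set.Nonempty {y : ℝ | ∃ u : Fin n → ℝ, y = ∑ i, p i * u i - E u} :=
    fun p => ⟨∑ i, p i * (0 : ℝ) - E 0, ⟨0, rfl⟩⟩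
  have hSbdd : ∀ p ∈ Δ, BddAbove {y : ℝ | ∃ u : Fin n → ℝ, y = ∑ i, p i * u i - E u} := by
    intro p hp
    exact ⟨M, fun y hy => by obtain ⟨u, rfl⟩ := hy; exact hub p hp u⟩
  have hle : ∀ p ∈ Δ, ∀ u : Fin n → ℝ, ∑ i, p i * u i - E u ≤ Estar p := by
    intro p hp u
    rw [hEstar]
    exact le_csSup (hSbdd p hp) ⟨u, rfl⟩
  have hEstarM : ∀ p ∈ Δ, Estar p ≤ M := by
    intro p hp
    rw [hEstar]
    exact csSup_le (hSne p) (fun y hy => by obtain ⟨u, rfl⟩ := hy; exact hub p hp u)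
  -- convexity-type bound
  have hconv : ∀ p ∈ Δ, ∀ r ∈ Δ, ∀ t : ℝ, 0 ≤ t → t ≤ 1 →
      ∀ q : Fin n → ℝ, (∀ i, q i = t * p i + (1 - t) * r i) →
      Estar q ≤ t * Estar p + (1 - t) * M := by
    intro p hp r hr t ht0 ht1 q hq
    rw [hEstar]
    refine csSup_le (hSne q) ?_
    rintro y ⟨u, rfl⟩
    have h1 : ∑ i, q i * u i = t * (∑ i, p i * u i) + (1 - t) * (∑ i, r i * u i) := by
      rw [Finset.mul_sum, Finset.mul_sum, ← Finset.sum_add_distrib]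
      refine Finset.sum_congr rfl fun i _ => by rw [hq i]; ring
    have h2 : ∑ i, p i * u i - E u ≤ Estar p := hle p hp u
    have h3 : ∑ i, r i * u i - E u ≤ M := hub r hr u
    have h4 : ∑ i, q i * u i - E u
        = t * (∑ i, p i * u i - E u) + (1 - t) * (∑ i, r i * u i - E u) := by
      rw [h1]; ring
    rw [h4]
    have := mul_le_mul_of_nonneg_left h2 ht0
    have := mul_le_mul_of_nonneg_left h3 (by linarith : (0:ℝ) ≤ 1 - t)
    linarith
  -- main continuity argument
  intro p hp
  rw [Metric.continuousWithinAt_iff]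
  intro ε hε
  obtain ⟨hps, hpn⟩ := hp
  have hpΔ : p ∈ Δ := ⟨hps, hpn⟩
  -- lower semicontinuity part: find a good u
  have hlt : Estar p - ε / 2 < Estar p := by linarith
  obtain ⟨y, hy, hylt⟩ := exists_lt_of_lt_csSup (hSne p) (by rw [← hEstar p] at *; exact hlt)
  obtain ⟨u, rfl⟩ := hy
  set T : ℝ := ∑ i, |u i| with hT
  have hTnn : 0 ≤ T := Finset.sum_nonneg fun i _ => abs_nonneg _
  set δ₂ : ℝ := (ε / 2) / (T + 1) with hδ₂
  have hδ₂pos : 0 < δ₂ := div_pos (by linarith) (by linarith)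
  -- upper semicontinuity part
  set D : ℝ := M - Estar p with hD
  have hDnn : 0 ≤ D := by have := hEstarM p hpΔ; simp [hD]; linarith
  set s : ℝ := ε / (2 * (D + ε)) with hs
  have hspos : 0 < s := div_pos hε (by linarith)
  have hs1 : s ≤ 1 / 2 := by
    rw [hs, div_le_div_iff₀ (by linarith) (by norm_num)]
    nlinarith
  have hsD : s * D < ε := by
    rw [hs, div_mul_eq_mul_div, div_lt_iff₀ (by linarith)]
    nlinarith
  set t : ℝ := 1 - s with htdef
  -- positive minimum of the positive coordinates
  set P : Finset (Fin n) := Finset.univ.filter (fun i => 0 < p i) with hP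
  have hPne : P.Nonempty := by
    by_contra h
    rw [Finset.not_nonempty_iff_eq_empty] at h
    have : ∀ i, p i = 0 := by
      intro i
      rcases lt_or_eq_of_le (hpn i) with h1 | h1
      · exfalso
        have : i ∈ P := by simp [hP, h1]
        simp [h] at this
      · exact h1.symm
    rw [Finset.sum_congr rfl (fun i _ => this i)] at hps
    simp at hps
  set α : ℝ := P.inf' hPne p with hα
  have hαpos : 0 < α := by
    rw [hα, Finset.lt_inf'_iff]
    intro i hi
    exact (Finset.mem_filter.mp hi).2
  set δ₁ : ℝ := s * α with hδ₁
  have hδ₁pos : 0 < δ₁ := mul_pos hspos hαpos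
  refine ⟨min δ₁ δ₂, lt_min hδ₁pos hδ₂pos, ?_⟩
  intro q hqΔ hqd
  have hq1 : dist q p < δ₁ := lt_of_lt_of_le hqd (min_le_left _ _)
  have hq2 : dist q p < δ₂ := lt_of_lt_of_le hqd (min_le_right _ _)
  have hqcoord : ∀ i, |q i - p i| ≤ dist q p := by
    intro i
    have := dist_le_pi_dist q p i
    rwa [Real.dist_eq] at this
  obtain ⟨hqs, hqn⟩ := hqΔ
  rw [Real.dist_eq, abs_sub_lt_iff]
  constructor
  · -- Estar q - Estar p < ε : upper bound via convex decomposition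
    set r : Fin n → ℝ := fun i => (q i - t * p i) / s with hr
    have hts : 1 - t = s := by rw [htdef]; ring
    have hrΔ : r ∈ Δ := by
      constructor
      · have : ∑ i, r i = (∑ i, (q i - t * p i)) / s := by
          rw [← Finset.sum_div]
        rw [Set.mem_setOf_eq] at *
        rw [this, Finset.sum_sub_distrib, ← Finset.mul_sum, hqs, hps]
        field_simp [htdef]
        exact hts
      · intro i
        have hnum : 0 ≤ q i - t * p i := by
          rcases lt_or_eq_of_le (hpn i) with h1 | h1
          · have hiP : i ∈ P := by simp [hP, h1]
            have hαle : α ≤ p i := Finset.inf'_le p hiP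
            have h2 : p i - q i ≤ δ₁ := by
              have h3 : |p i - q i| ≤ dist q p := by rw [abs_sub_comm]; exact hqcoord i
              have h3' := le_abs_self (p i - q i)
              linarith [hq1]
            have h4 : δ₁ ≤ s * p i := by
              rw [hδ₁]; exact mul_le_mul_of_nonneg_left hαle (le_of_lt hspos)
            have : t * p i = p i - s * p i := by rw [htdef]; ring
            linarith
          · rw [← h1]
            simpa using hqn i
        exact div_nonneg hnum (le_of_lt hspos)
    have hqdecomp : ∀ i, q i = t * p i + (1 - t) * r i := by
      intro i
      rw [hts, hr]
      field_simp
      ring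
    have h5 : Estar q ≤ t * Estar p + (1 - t) * M :=
      hconv p hpΔ r hrΔ t (by rw [htdef]; linarith) (by rw [htdef]; linarith) q hqdecomp
    have h6 : t * Estar p + (1 - t) * M = Estar p + s * D := by
      rw [htdef, hD]; ring
    linarith
  · -- Estar p - Estar q < ε : lower bound via the chosen u
    have h7 : Estar q ≥ ∑ i, q i * u i - E u := hle q ⟨hqs, hqn⟩ u
    have h8 : |∑ i, q i * u i - ∑ i, p i * u i| ≤ δ₂ * T := by
      rw [← Finset.sum_sub_distrib]
      calc |∑ i, (q i * u i - p i * u i)| ≤ ∑ i, |q i * u i - p i * u i| :=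
            Finset.abs_sum_le_sum_abs _ _
        _ ≤ ∑ i, δ₂ * |u i| := by
            refine Finset.sum_le_sum fun i _ => ?_
            rw [← sub_mul, abs_mul]
            exact mul_le_mul_of_nonneg_right (le_of_lt (lt_of_le_of_lt (hqcoord i) hq2))
              (abs_nonneg _)
        _ = δ₂ * T := by rw [hT, Finset.mul_sum]
    have h9 : δ₂ * T < ε / 2 := by
      rw [hδ₂]
      rw [div_mul_eq_mul_div, div_lt_iff₀ (by linarith)]
      nlinarith
    have h10 : ∑ i, q i * u i - E u > ∑ i, p i * u i - E u - ε / 2 := by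
      have h11 := (abs_le.mp h8).1
      linarith
    linarith
  done
end

section
/- Representation of the (∞,1)-operator norm on the class 𝒜: for every A ∈ 𝒜 one has ‖A‖_{∞,1} = 4 · max{ ∑_{i,j ∈ K} a_{ij} : K ⊆ {1,…,n}, |K| ≤ ⌊n/2⌋ }. -/
open Finset

section OpNormAux

variable {n : ℕ}

private def ind (K : Finset (Fin n)) : Fin n → ℝ := fun i => if i ∈ K then 1 else 0

private def Bv (A : Matrix (Fin n) (Fin n) ℝ) (x y : Fin n → ℝ) : ℝ :=
  ∑ i, ∑ j, A i j * x i * y j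

private lemma sum_ind_mul (K : Finset (Fin n)) (f : Fin n → ℝ) :
    ∑ i, ind K i * f i = ∑ i ∈ K, f i := by
  simp [ind, ite_mul, Finset.sum_ite_mem]

private lemma mulVec_apply (A : Matrix (Fin n) (Fin n) ℝ) (z : Fin n → ℝ) (i : Fin n) :
    A.mulVec z i = ∑ j, A i j * z j := rfl

variable (A : Matrix (Fin n) (Fin n) ℝ)

private lemma colsum (hsymm : ∀ i j, A i j = A j i) (hrow : ∀ i, ∑ j, A i j = 0)
    (j : Fin n) : ∑ i, A i j = 0 := by
  rw [show (∑ i, A i j) = ∑ i, A j i from Finset.sum_congr rfl fun i _ => hsymm i j, hrow]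

private lemma Bv_nonneg (hsymm : ∀ i j, A i j = A j i) (hoff : ∀ i j, i ≠ j → A i j ≤ 0)
    (hrow : ∀ i, ∑ j, A i j = 0) (x : Fin n → ℝ) : 0 ≤ Bv A x x := by
  have h1 : ∑ i, ∑ j, A i j * x i ^ 2 = 0 := by
    refine Finset.sum_eq_zero fun i _ => ?_
    rw [← Finset.sum_mul, hrow, zero_mul]
  have h2 : ∑ i, ∑ j, A i j * x j ^ 2 = 0 := by
    rw [Finset.sum_comm]
    refine Finset.sum_eq_zero fun j _ => ?_
    rw [← Finset.sum_mul, colsum A hsymm hrow, zero_mul]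
  have h5 : 0 ≤ ∑ i, ∑ j, (-A i j) * (x i - x j) ^ 2 := by
    refine Finset.sum_nonneg fun i _ => Finset.sum_nonneg fun j _ => ?_
    rcases eq_or_ne i j with rfl | hij
    · simp
    · exact mul_nonneg (by linarith [hoff i j hij]) (sq_nonneg _)
  have h3 : ∑ i, ∑ j, (-A i j) * (x i - x j) ^ 2
      = ∑ i, ∑ j, (2 * (A i j * x i * x j) - A i j * x i ^ 2 - A i j * x j ^ 2) :=
    Finset.sum_congr rfl fun i _ => Finset.sum_congr rfl fun j _ => by ring
  have h4 : ∑ i, ∑ j, (2 * (A i j * x i * x j) - A i j * x i ^ 2 - A i j * x j ^ 2)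
      = 2 * Bv A x x - (∑ i, ∑ j, A i j * x i ^ 2) - ∑ i, ∑ j, A i j * x j ^ 2 := by
    simp [Finset.sum_sub_distrib, Finset.mul_sum, Bv]
  rw [h3, h4, h1, h2] at h5
  linarith

private lemma Bv_sub_sub (x y : Fin n → ℝ) :
    Bv A (x - y) (x - y) = Bv A x x - Bv A x y - Bv A y x + Bv A y y := by
  unfold Bv
  simp only [Pi.sub_apply]
  rw [← Finset.sum_sub_distrib, ← Finset.sum_sub_distrib, ← Finset.sum_add_distrib]
  refine Finset.sum_congr rfl fun i _ => ?_
  rw [← Finset.sum_sub_distrib, ← Finset.sum_sub_distrib, ← Finset.sum_add_distrib]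
  exact Finset.sum_congr rfl fun j _ => by ring

private lemma Bv_symm (hsymm : ∀ i j, A i j = A j i) (x y : Fin n → ℝ) :
    Bv A x y = Bv A y x := by
  unfold Bv
  rw [Finset.sum_comm]
  exact Finset.sum_congr rfl fun j _ => Finset.sum_congr rfl fun i _ => by
    rw [hsymm i j]; ring

private lemma Bv_one_right (hrow : ∀ i, ∑ j, A i j = 0) (x : Fin n → ℝ) :
    Bv A x (fun _ => 1) = 0 := by
  unfold Bv
  refine Finset.sum_eq_zero fun i _ => ?_
  simp only [mul_one]
  rw [← Finset.sum_mul, hrow, zero_mul]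

private lemma Bv_one_left (hsymm : ∀ i j, A i j = A j i) (hrow : ∀ i, ∑ j, A i j = 0)
    (y : Fin n → ℝ) : Bv A (fun _ => 1) y = 0 := by
  unfold Bv
  rw [Finset.sum_comm]
  refine Finset.sum_eq_zero fun j _ => ?_
  simp only [mul_one]
  rw [← Finset.sum_mul, colsum A hsymm hrow, zero_mul]

private lemma Bv_ind (U S : Finset (Fin n)) :
    Bv A (ind U) (ind S) = ∑ i ∈ U, ∑ j ∈ S, A i j := by
  unfold Bv
  rw [← sum_ind_mul U fun i => ∑ j ∈ S, A i j]
  refine Finset.sum_congr rfl fun i _ => ?_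
  rw [← sum_ind_mul S fun j => A i j, Finset.mul_sum]
  exact Finset.sum_congr rfl fun j _ => by ring

private lemma ind_compl (K : Finset (Fin n)) :
    ind Kᶜ = (fun _ => (1:ℝ)) - ind K := by
  funext i
  by_cases h : i ∈ K <;> simp [ind, h]

private lemma aK_compl (hsymm : ∀ i j, A i j = A j i) (hrow : ∀ i, ∑ j, A i j = 0)
    (K : Finset (Fin n)) :
    ∑ i ∈ Kᶜ, ∑ j ∈ Kᶜ, A i j = ∑ i ∈ K, ∑ j ∈ K, A i j := by
  rw [← Bv_ind, ← Bv_ind, ind_compl, Bv_sub_sub]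
  simp only [Bv_one_right A hrow, Bv_one_left A hsymm hrow]
  ring

end OpNormAux


/-- Representation of the `(∞,1)`-operator norm on the class `𝒜` of symmetric
matrices with nonnegative diagonal, nonpositive off-diagonal entries and vanishing row sums:
`‖A‖_{∞,1} = 4 · max{ ∑_{i,j ∈ K} a_{ij} : K ⊆ {1,…,n}, |K| ≤ ⌊n/2⌋ }`. -/
theorem opNorm_infty_one_eq_four_mul_max
    (n : ℕ) (A : Matrix (Fin n) (Fin n) ℝ)
    (hsymm : ∀ i j, A i j = A j i)
    (hdiag : ∀ i, 0 ≤ A i i)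
    (hoff : ∀ i j, i ≠ j → A i j ≤ 0)
    (hrow : ∀ i, ∑ j, A i j = 0) :
    sSup {y : ℝ | ∃ z : Fin n → ℝ, (∀ i, |z i| ≤ 1) ∧ y = ∑ i, |A.mulVec z i|}
      = 4 * sSup {y : ℝ | ∃ K : Finset (Fin n), K.card ≤ n / 2 ∧
          y = ∑ i ∈ K, ∑ j ∈ K, A i j} := by
  classical
  set F : Finset ℝ := ((univ : Finset (Finset (Fin n))).filter fun K => K.card ≤ n / 2).image
      (fun K => ∑ i ∈ K, ∑ j ∈ K, A i j) with hF
  have hFne : F.Nonempty :=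
    ⟨∑ i ∈ (∅ : Finset (Fin n)), ∑ j ∈ (∅ : Finset (Fin n)), A i j,
      mem_image.2 ⟨∅, by simp, rfl⟩⟩
  set M := F.max' hFne with hM
  have hMmem : ∃ K : Finset (Fin n), K.card ≤ n / 2 ∧ (∑ i ∈ K, ∑ j ∈ K, A i j) = M := by
    obtain ⟨K, hK, hKe⟩ := mem_image.1 (F.max'_mem hFne)
    exact ⟨K, (mem_filter.1 hK).2, hKe⟩
  have hMub : ∀ K : Finset (Fin n), K.card ≤ n / 2 → (∑ i ∈ K, ∑ j ∈ K, A i j) ≤ M :=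
    fun K hK => F.le_max' _ (mem_image.2 ⟨K, mem_filter.2 ⟨mem_univ _, hK⟩, rfl⟩)
  have hMall : ∀ K : Finset (Fin n), (∑ i ∈ K, ∑ j ∈ K, A i j) ≤ M := by
    intro K
    by_cases hK : K.card ≤ n / 2
    · exact hMub K hK
    · have h1 : Kᶜ.card = n - K.card := by
        rw [Finset.card_compl, Fintype.card_fin]
      have h2 : K.card ≤ n := by
        simpa using K.card_le_univ
      have hc : Kᶜ.card ≤ n / 2 := by omega
      calc (∑ i ∈ K, ∑ j ∈ K, A i j) = ∑ i ∈ Kᶜ, ∑ j ∈ Kᶜ, A i j :=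
            (aK_compl A hsymm hrow K).symm
        _ ≤ M := hMub _ hc
  -- bilinear bound
  have hbil : ∀ U S : Finset (Fin n), (∑ i ∈ U, ∑ j ∈ S, A i j) ≤ M := by
    intro U S
    have h0 := Bv_nonneg A hsymm hoff hrow (ind U - ind S)
    rw [Bv_sub_sub] at h0
    have hsy := Bv_symm A hsymm (ind U) (ind S)
    have e1 := Bv_ind A U S
    have eU := Bv_ind A U U
    have eS := Bv_ind A S S
    have hU := hMall U
    have hS := hMall S
    linarith
  -- value of mulVec at ±1 vectors
  have hmv : ∀ (S : Finset (Fin n)) (j : Fin n),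
      A.mulVec (fun i => if i ∈ S then (1:ℝ) else -1) j = 2 * ∑ k ∈ S, A j k := by
    intro S j
    rw [mulVec_apply]
    have e : ∀ k, A j k * (if k ∈ S then (1:ℝ) else -1)
        = 2 * (ind S k * A j k) - A j k := by
      intro k; by_cases h : k ∈ S <;> simp [ind, h] <;> ring
    rw [Finset.sum_congr rfl fun k _ => e k, Finset.sum_sub_distrib, ← Finset.mul_sum,
      sum_ind_mul, hrow, sub_zero]
  -- total of row-restricted sums is zero
  have hrtot : ∀ S : Finset (Fin n), ∑ j, ∑ k ∈ S, A j k = 0 := by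
    intro S
    exact Finset.sum_comm.trans (Finset.sum_eq_zero fun k _ => colsum A hsymm hrow k)
  -- key upper bound for ±1 vectors
  have hpm : ∀ S : Finset (Fin n),
      ∑ j, |A.mulVec (fun i => if i ∈ S then (1:ℝ) else -1) j| ≤ 4 * M := by
    intro S
    set r : Fin n → ℝ := fun j => ∑ k ∈ S, A j k with hr
    set P : Finset (Fin n) := univ.filter fun j => 0 ≤ r j with hP
    have hA1 : ∑ j ∈ P, |r j| = ∑ j ∈ P, r j :=
      Finset.sum_congr rfl fun j hj => abs_of_nonneg (mem_filter.1 hj).2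
    have hB1 : ∑ j ∈ univ.filter (fun j => ¬ 0 ≤ r j), |r j|
        = -∑ j ∈ univ.filter (fun j => ¬ 0 ≤ r j), r j := by
      rw [← Finset.sum_neg_distrib]
      exact Finset.sum_congr rfl fun j hj => abs_of_neg (lt_of_not_ge (mem_filter.1 hj).2)
    have hsplit : ∑ j ∈ P, |r j| + ∑ j ∈ univ.filter (fun j => ¬ 0 ≤ r j), |r j|
        = ∑ j, |r j| := Finset.sum_filter_add_sum_filter_not _ _ _
    have hsplit2 : ∑ j ∈ P, r j + ∑ j ∈ univ.filter (fun j => ¬ 0 ≤ r j), r j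
        = ∑ j, r j := Finset.sum_filter_add_sum_filter_not _ _ _
    have htot : ∑ j, r j = 0 := hrtot S
    have hPb : ∑ j ∈ P, r j ≤ M := by
      have : ∑ j ∈ P, r j = ∑ i ∈ P, ∑ k ∈ S, A i k := rfl
      rw [this]; exact hbil P S
    have habs : ∑ j, |r j| ≤ 2 * M := by linarith
    calc ∑ j, |A.mulVec (fun i => if i ∈ S then (1:ℝ) else -1) j|
        = ∑ j, |2 * r j| := by
          refine Finset.sum_congr rfl fun j _ => ?_
          rw [hmv S j]
      _ = 2 * ∑ j, |r j| := by
          rw [Finset.mul_sum]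
          refine Finset.sum_congr rfl fun j _ => ?_
          rw [abs_mul]; norm_num
      _ ≤ 4 * M := by linarith
  -- key upper bound for all z
  have hkey : ∀ z : Fin n → ℝ, (∀ i, |z i| ≤ 1) → ∑ i, |A.mulVec z i| ≤ 4 * M := by
    intro z hz
    set ε : Fin n → ℝ := fun i => if 0 ≤ A.mulVec z i then 1 else -1 with hε
    have h1 : ∑ i, |A.mulVec z i| = ∑ i, ε i * A.mulVec z i := by
      refine Finset.sum_congr rfl fun i _ => ?_
      by_cases h : 0 ≤ A.mulVec z i
      · simp [hε, h, abs_of_nonneg h]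
      · simp [hε, h, abs_of_neg (lt_of_not_ge h)]
    have h2 : ∑ i, ε i * A.mulVec z i = ∑ j, z j * A.mulVec ε j := by
      have lhs : ∑ i, ε i * A.mulVec z i = ∑ i, ∑ j, ε i * (A i j * z j) := by
        refine Finset.sum_congr rfl fun i _ => ?_
        rw [mulVec_apply, Finset.mul_sum]
      rw [lhs, Finset.sum_comm]
      refine Finset.sum_congr rfl fun j _ => ?_
      rw [mulVec_apply, Finset.mul_sum]
      exact Finset.sum_congr rfl fun i _ => by rw [hsymm i j]; ring
    have h3 : ∑ j, z j * A.mulVec ε j ≤ ∑ j, |A.mulVec ε j| := by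
      refine Finset.sum_le_sum fun j _ => ?_
      calc z j * A.mulVec ε j ≤ |z j * A.mulVec ε j| := le_abs_self _
        _ = |z j| * |A.mulVec ε j| := abs_mul _ _
        _ ≤ 1 * |A.mulVec ε j| := mul_le_mul_of_nonneg_right (hz j) (abs_nonneg _)
        _ = |A.mulVec ε j| := one_mul _
    have hεeq : ε = fun i => if i ∈ (univ.filter fun i => 0 ≤ A.mulVec z i) then (1:ℝ) else -1 := by
      funext i; by_cases h : 0 ≤ A.mulVec z i <;> simp [hε, h]
    have h4 : ∑ j, |A.mulVec ε j| ≤ 4 * M := by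
      rw [hεeq]; exact hpm _
    linarith
  -- attainment
  obtain ⟨K₀, hK₀c, hK₀⟩ := hMmem
  set z₀ : Fin n → ℝ := fun i => if i ∈ K₀ then 1 else -1 with hz₀def
  have hz₀ : ∀ i, |z₀ i| ≤ 1 := by
    intro i; by_cases h : i ∈ K₀ <;> simp [hz₀def, h]
  have hval : ∑ i, |A.mulVec z₀ i| = 4 * M := by
    refine le_antisymm (hkey z₀ hz₀) ?_
    set r : Fin n → ℝ := fun j => ∑ k ∈ K₀, A j k with hr
    have htot : ∑ j, r j = 0 := hrtot K₀
    have hKsum : ∑ j ∈ K₀, r j = M := hK₀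
    have hsplit : ∑ j ∈ K₀, r j + ∑ j ∈ K₀ᶜ, r j = ∑ j, r j :=
      Finset.sum_add_sum_compl K₀ r
    have hKc : ∑ j ∈ K₀ᶜ, r j = -M := by linarith
    have habs1 : M ≤ ∑ j ∈ K₀, |r j| := by
      calc M = ∑ j ∈ K₀, r j := hKsum.symm
        _ ≤ ∑ j ∈ K₀, |r j| := Finset.sum_le_sum fun j _ => le_abs_self _
    have habs2 : M ≤ ∑ j ∈ K₀ᶜ, |r j| := by
      have : -∑ j ∈ K₀ᶜ, r j ≤ ∑ j ∈ K₀ᶜ, |r j| := by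
        rw [← Finset.sum_neg_distrib]
        exact Finset.sum_le_sum fun j _ => neg_le_abs _
      linarith
    have hsplitabs : ∑ j ∈ K₀, |r j| + ∑ j ∈ K₀ᶜ, |r j| = ∑ j, |r j| :=
      Finset.sum_add_sum_compl K₀ _
    have heq : ∑ i, |A.mulVec z₀ i| = 2 * ∑ j, |r j| := by
      rw [Finset.mul_sum]
      refine Finset.sum_congr rfl fun j _ => ?_
      rw [hmv K₀ j, abs_mul]; norm_num; rfl
    rw [heq]; linarith
  -- conclude
  have hRHS : sSup {y : ℝ | ∃ K : Finset (Fin n), K.card ≤ n / 2 ∧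
      y = ∑ i ∈ K, ∑ j ∈ K, A i j} = M := by
    refine IsGreatest.csSup_eq ⟨⟨K₀, hK₀c, hK₀.symm⟩, ?_⟩
    rintro y ⟨K, hK, rfl⟩
    exact hMub K hK
  have hLHS : sSup {y : ℝ | ∃ z : Fin n → ℝ, (∀ i, |z i| ≤ 1) ∧ y = ∑ i, |A.mulVec z i|}
      = 4 * M := by
    refine IsGreatest.csSup_eq ⟨⟨z₀, hz₀, hval.symm⟩, ?_⟩
    rintro y ⟨z, hz, rfl⟩
    exact hkey z hz
  rw [hLHS, hRHS]
end

section
/- Strong convexity of E* under modal bounds on differences of utility shocks: suppose that for every pair i ≠ j the pushforward of μ under the map x ↦ x⁽ʲ⁾ − x⁽ⁱ⁾ is absolutely continuous with respect to Lebesgue measure on ℝ with a density g_{i,j} that attains its maximum at a mode z̄_{i,j} ∈ ℝ (so g_{i,j}(z) ≤ g_{i,j}(z̄_{i,j}) for all z ∈ ℝ). Then the convex conjugate E* is β-strongly convex on Δ with respect to the ℓ1-norm with convexity parameter β = 1 / (2 ∑_{i=1}^{n} ∑_{j≠i} g_{i,j}(z̄_{i,j})). -/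
/-!
For `p ≠ q` in the simplex let `σ = ±1` be the sign pattern of `p - q`, so that
`⟪p - q, σ⟫ = ‖p - q‖₁`. Along the line `u + t σ` the surplus is a constant plus `𝔼|t - V|`, where
`V` is half the gap between the best alternative in `{p < q}` and the best one in `{q ≤ p}`.
A union bound over pairs `i ∈ {q ≤ p}`, `j ∈ {p < q}`, each bounded by the average of the two modal
values `g i j (z̄ i j)` and `g j i (z̄ j i)`, shows that `V` has density at most
`S = ∑ i, ∑ j ≠ i, g i j (z̄ i j)`. Hence the right derivative `2 P(V ≤ t) - 1` of `t ↦ 𝔼|t - V|`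
is `2S`-Lipschitz and the surplus is `S`-smooth along `σ`. Testing the conjugate at
`u + (1 - α) τ σ` and `u - α τ σ` with `τ = ‖p - q‖₁ / (2S)` gives the strong convexity bound.
-/

open MeasureTheory Set

lemma monotone_step (v : ℝ) : Monotone fun r : ℝ => if v ≤ r then (1 : ℝ) else -1 := by
  intro a b hab
  dsimp only
  split_ifs <;> linarith

lemma integral_step_eq_abs_sub_sub (v a b : ℝ) :
    ∫ r in a..b, (if v ≤ r then (1 : ℝ) else -1) = |b - v| - |a - v| := by
  refine intervalIntegral.integral_eq_sub_of_hasDeriv_right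
    (by fun_prop : Continuous fun r : ℝ => |r - v|).continuousOn (fun r _ => ?_)
    (monotone_step v).intervalIntegrable
  rcases le_or_gt v r with h | h
  · rw [if_pos h]
    exact ((hasDerivWithinAt_id r _).sub_const v).congr
      (fun y hy => abs_of_nonneg (by linarith [mem_Ioi.1 hy])) (abs_of_nonneg (by linarith))
  · rw [if_neg h.not_ge]
    have := (hasDerivAt_abs_neg (sub_neg.2 h)).comp r ((hasDerivAt_id r).sub_const v)
    simpa [Function.comp_def] using this.hasDerivWithinAt

lemma integral_le_tangent_of_sub_le {m : ℝ → ℝ} {K : ℝ} (hm : Monotone m)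
    (hK : ∀ r r', r ≤ r' → m r' - m r ≤ K * (r' - r)) (s t : ℝ) :
    ∫ r in s..t, m r ≤ m s * (t - s) + K / 2 * (t - s) ^ 2 := by
  have hcont : Continuous fun r => m s + K * (r - s) := by fun_prop
  have hlin : ∀ a b : ℝ, ∫ r in a..b, (m s + K * (r - s))
      = m s * (b - a) + K / 2 * ((b - s) ^ 2 - (a - s) ^ 2) := by
    intro a b
    rw [intervalIntegral.integral_add intervalIntegrable_const
      ((by fun_prop : Continuous fun r => K * (r - s)).intervalIntegrable _ _),
      intervalIntegral.integral_const, intervalIntegral.integral_const_mul,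
      intervalIntegral.integral_comp_sub_right (fun x => x), integral_id]
    simp only [smul_eq_mul]
    ring
  rcases le_total s t with hst | hts
  · calc ∫ r in s..t, m r ≤ ∫ r in s..t, (m s + K * (r - s)) :=
          intervalIntegral.integral_mono_on hst hm.intervalIntegrable
            (hcont.intervalIntegrable _ _) fun r hr => by linarith [hK s r hr.1]
      _ = _ := by rw [hlin]; ring
  · have := intervalIntegral.integral_mono_on hts (hcont.intervalIntegrable (μ := volume) _ _)
      hm.intervalIntegrable fun r hr => by linarith [hK r s hr.2]
    rw [hlin, sub_self] at this
    rw [intervalIntegral.integral_symm]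
    linarith

section AbsDeviation

variable {Ω : Type*} [MeasurableSpace Ω] {μ : Measure Ω} [IsFiniteMeasure μ] {V : Ω → ℝ}

/-- `r ↦ P(V ≤ r) - P(V > r)`, the right derivative of `t ↦ 𝔼|t - V|`. -/
noncomputable def absDevDeriv (μ : Measure Ω) (V : Ω → ℝ) (r : ℝ) : ℝ :=
  ∫ x, (if V x ≤ r then (1 : ℝ) else -1) ∂μ

lemma integrable_step (hV : Measurable V) (r : ℝ) :
    Integrable (fun x => if V x ≤ r then (1 : ℝ) else -1) μ :=
  Integrable.of_bound
    (Measurable.ite (hV measurableSet_Iic) measurable_const measurable_const).aestronglyMeasurable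
    1 (.of_forall fun x => by split_ifs <;> simp)

lemma monotone_absDevDeriv (hV : Measurable V) : Monotone (absDevDeriv μ V) :=
  fun _ _ h => integral_mono (integrable_step hV _) (integrable_step hV _)
    fun x => monotone_step (V x) h

lemma absDevDeriv_sub_absDevDeriv (hV : Measurable V) {r r' : ℝ} (h : r ≤ r') :
    absDevDeriv μ V r' - absDevDeriv μ V r = 2 * μ.real (V ⁻¹' Ioc r r') := by
  classical
  have hstep : ∀ x, ((if V x ≤ r' then (1 : ℝ) else -1) - if V x ≤ r then 1 else -1)
      = (V ⁻¹' Ioc r r').indicator (fun _ => 2) x := by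
    intro x
    rw [indicator_apply, mem_preimage, mem_Ioc]
    split_ifs <;> grind
  rw [absDevDeriv, absDevDeriv, ← integral_sub (integrable_step hV _) (integrable_step hV _),
    funext hstep, integral_indicator_const _ (hV measurableSet_Ioc), smul_eq_mul, mul_comm]

lemma integral_abs_sub_sub_integral_abs_sub (hV : Measurable V) (hVi : Integrable V μ)
    (a b : ℝ) :
    ∫ x, |b - V x| ∂μ - ∫ x, |a - V x| ∂μ = ∫ r in a..b, absDevDeriv μ V r := by
  have hint : ∀ t : ℝ, Integrable (fun x => |t - V x|) μ :=
    fun t => ((integrable_const t).sub hVi).abs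
  have hprod : Integrable (Function.uncurry fun r x => if V x ≤ r then (1 : ℝ) else -1)
      ((volume.restrict (uIoc a b)).prod μ) := by
    have : IsFiniteMeasure (volume.restrict (uIoc a b)) :=
      isFiniteMeasure_restrict.2 measure_Ioc_lt_top.ne
    refine Integrable.of_bound ?_ 1 (.of_forall fun x => by
      simp only [Function.uncurry]; split_ifs <;> simp)
    exact (Measurable.ite (measurableSet_le (hV.comp measurable_snd) measurable_fst)
      measurable_const measurable_const).aestronglyMeasurable
  simp only [absDevDeriv]
  rw [intervalIntegral_integral_swap hprod, ← integral_sub (hint b) (hint a)]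
  exact integral_congr_ae (.of_forall fun x => (integral_step_eq_abs_sub_sub (V x) a b).symm)

lemma integral_abs_sub_le {S : ℝ} (hV : Measurable V) (hVi : Integrable V μ)
    (hS : ∀ r r', r ≤ r' → μ.real (V ⁻¹' Ioc r r') ≤ S * (r' - r)) (s t : ℝ) :
    ∫ x, |t - V x| ∂μ ≤ ∫ x, |s - V x| ∂μ + absDevDeriv μ V s * (t - s) + S * (t - s) ^ 2 := by
  have := integral_le_tangent_of_sub_le (monotone_absDevDeriv (μ := μ) hV) (K := 2 * S)
    (fun r r' h => by rw [absDevDeriv_sub_absDevDeriv hV h]; linarith [hS r r' h]) s t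
  rw [← integral_abs_sub_sub_integral_abs_sub hV hVi] at this
  linarith

lemma convex_comb_integral_abs_sub_le {S α : ℝ} (hV : Measurable V) (hVi : Integrable V μ)
    (hS : ∀ r r', r ≤ r' → μ.real (V ⁻¹' Ioc r r') ≤ S * (r' - r))
    (hα : α ∈ Icc (0 : ℝ) 1) (x y : ℝ) :
    α * ∫ ω, |x - V ω| ∂μ + (1 - α) * ∫ ω, |y - V ω| ∂μ
      ≤ ∫ ω, |(α * x + (1 - α) * y) - V ω| ∂μ + S * (α * (1 - α) * (x - y) ^ 2) := by
  have hx := mul_le_mul_of_nonneg_left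
    (integral_abs_sub_le hV hVi hS (α * x + (1 - α) * y) x) hα.1
  have hy := mul_le_mul_of_nonneg_left
    (integral_abs_sub_le hV hVi hS (α * x + (1 - α) * y) y) (sub_nonneg.2 hα.2)
  linear_combination hx + hy

end AbsDeviation

lemma pos_of_withDensity_ne_zero {g : ℝ → ℝ} {z₀ : ℝ} (hmax : ∀ z, g z ≤ g z₀)
    (h : volume.withDensity (fun z => ENNReal.ofReal (g z)) ≠ 0) : 0 < g z₀ := by
  by_contra! h0
  refine h ?_
  rw [show (fun z => ENNReal.ofReal (g z)) = 0 from
    funext fun z => ENNReal.ofReal_eq_zero.2 ((hmax z).trans h0), withDensity_zero]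

lemma measureReal_preimage_le_of_map_eq_withDensity {X : Type*} [MeasurableSpace X]
    {μ : Measure X} {f : X → ℝ} (hf : Measurable f) {g : ℝ → ℝ} {z₀ : ℝ}
    (hμ : μ.map f = volume.withDensity (fun z => ENNReal.ofReal (g z)))
    (hmax : ∀ z, g z ≤ g z₀) (h0 : 0 ≤ g z₀) {s : Set ℝ} (hs : MeasurableSet s)
    (hs' : volume s ≠ ⊤) : μ.real (f ⁻¹' s) ≤ g z₀ * volume.real s := by
  have : μ (f ⁻¹' s) ≤ ENNReal.ofReal (g z₀) * volume s := by
    rw [← Measure.map_apply hf hs, hμ, withDensity_apply _ hs, ← setLIntegral_const]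
    exact lintegral_mono fun z => ENNReal.ofReal_le_ofReal (hmax z)
  rw [measureReal_def, measureReal_def, ← ENNReal.toReal_ofReal h0, ← ENNReal.toReal_mul]
  exact ENNReal.toReal_mono (ENNReal.mul_ne_top ENNReal.ofReal_ne_top hs') this

lemma measureReal_sub_mem_Ioc_le {ι : Type*} {μ : Measure (ι → ℝ)} {g : ι → ι → ℝ → ℝ}
    {z : ι → ι → ℝ}
    (hg : ∀ i j, i ≠ j → μ.map (fun x : ι → ℝ => x j - x i)
      = volume.withDensity (fun t => ENNReal.ofReal (g i j t)))
    (hmode : ∀ i j, i ≠ j → ∀ t, g i j t ≤ g i j (z i j))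
    (hz : ∀ i j, i ≠ j → 0 ≤ g i j (z i j)) {i j : ι} (hij : i ≠ j) {a b : ℝ} (hab : a ≤ b) :
    μ.real {x | x j - x i ∈ Ioc a b} ≤ (g i j (z i j) + g j i (z j i)) / 2 * (b - a) := by
  have hji := measureReal_preimage_le_of_map_eq_withDensity (by fun_prop) (hg j i hij.symm)
    (hmode j i hij.symm) (hz j i hij.symm) (s := Ico (-b) (-a)) measurableSet_Ico
    measure_Ico_lt_top.ne
  have hij := measureReal_preimage_le_of_map_eq_withDensity (by fun_prop) (hg i j hij)
    (hmode i j hij) (hz i j hij) (s := Ioc a b) measurableSet_Ioc measure_Ioc_lt_top.ne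
  have hset : (fun x : ι → ℝ => x i - x j) ⁻¹' Ico (-b) (-a) = {x | x j - x i ∈ Ioc a b} := by
    ext x
    simp only [mem_preimage, mem_Ico, mem_ofPred_eq, mem_Ioc]
    constructor <;> rintro ⟨h₁, h₂⟩ <;> constructor <;> linarith
  rw [hset, Real.volume_real_Ico_of_le (by linarith), show -a - -b = b - a by ring] at hji
  rw [Real.volume_real_Ioc_of_le hab] at hij
  change μ.real {x | x j - x i ∈ Ioc a b} ≤ _ at hij
  linarith

lemma integrable_finset_sup' {X ι : Type*} [MeasurableSpace X] {μ : Measure X} {s : Finset ι}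
    (hs : s.Nonempty) {f : ι → X → ℝ} (hf : ∀ i ∈ s, Integrable (f i) μ) :
    Integrable (fun x => s.sup' hs fun i => f i x) μ := by
  simpa only [← Finset.sup'_apply] using
    Finset.sup'_induction hs (p := (Integrable · μ)) f (fun _ h₁ _ h₂ => h₁.sup h₂) hf

lemma measurable_finset_sup'_add {ι : Type*} {P : Finset ι} (hP : P.Nonempty) (u : ι → ℝ) :
    Measurable fun x : ι → ℝ => P.sup' hP (u + x) := by
  convert Finset.measurable_sup' hP (f := fun i (x : ι → ℝ) => u i + x i) fun i _ => by fun_prop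
    using 1
  funext x
  rw [Finset.sup'_apply]
  rfl

lemma integrable_finset_sup'_add {ι : Type*} {μ : Measure (ι → ℝ)} [IsFiniteMeasure μ]
    (hint : ∀ i, Integrable (fun x : ι → ℝ => x i) μ) {P : Finset ι} (hP : P.Nonempty)
    (u : ι → ℝ) : Integrable (fun x : ι → ℝ => P.sup' hP (u + x)) μ :=
  integrable_finset_sup' hP fun i _ => (integrable_const (u i)).add (hint i)

lemma max_add_sub_eq (A B t : ℝ) : max (A + t) (B - t) = (A + B) / 2 + |t - (B - A) / 2| := by
  rcases le_total (t - (B - A) / 2) 0 with h | h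
  · rw [abs_of_nonpos h, max_eq_right (by linarith)]; ring
  · rw [abs_of_nonneg h, max_eq_left (by linarith)]; ring

section Surplus

variable {ι : Type*} [Fintype ι]

noncomputable def surplus (μ : Measure (ι → ℝ)) (u : ι → ℝ) : ℝ := ∫ x, ⨆ i, (u i + x i) ∂μ

noncomputable def convexConjugate (E : (ι → ℝ) → ℝ) (p : ι → ℝ) : ℝ :=
  sSup {y | ∃ u, y = p ⬝ᵥ u - E u}

lemma pairing_sub_le_of_smooth_along {E : (ι → ℝ) → ℝ} {p q σ : ι → ℝ} {L α cp cq : ℝ}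
    (hα : α ∈ Icc (0 : ℝ) 1) (hp : ∀ u, p ⬝ᵥ u - E u ≤ cp) (hq : ∀ u, q ⬝ᵥ u - E u ≤ cq)
    (hE : ∀ u x y, α * E (u + x • σ) + (1 - α) * E (u + y • σ)
      ≤ E (u + (α * x + (1 - α) * y) • σ) + L * (α * (1 - α) * (x - y) ^ 2))
    (u : ι → ℝ) :
    (α • p + (1 - α) • q) ⬝ᵥ u - E u
      ≤ α * cp + (1 - α) * cq - (1 / (2 * L)) / 2 * α * (1 - α) * ((p - q) ⬝ᵥ σ) ^ 2 := by
  set D := (p - q) ⬝ᵥ σ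
  set τ := D / (2 * L)
  have hx := mul_le_mul_of_nonneg_left (hp (u + ((1 - α) * τ) • σ)) hα.1
  have hy := mul_le_mul_of_nonneg_left (hq (u + (-(α * τ)) • σ)) (sub_nonneg.2 hα.2)
  have hs := hE u ((1 - α) * τ) (-(α * τ))
  rw [show α * ((1 - α) * τ) + (1 - α) * -(α * τ) = 0 by ring, zero_smul, add_zero] at hs
  have hτ : L * τ ^ 2 - τ * D = -((1 / (2 * L)) / 2 * D ^ 2) := by
    rcases eq_or_ne L 0 with hL | hL
    · simp [τ, hL]
    · simp only [τ]; field_simp; ring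
  have hD : D = p ⬝ᵥ σ - q ⬝ᵥ σ := sub_dotProduct p q σ
  simp only [dotProduct_add, dotProduct_smul, add_dotProduct, smul_dotProduct, smul_eq_mul]
    at hx hy ⊢
  linear_combination hx + hy + hs + α * (1 - α) * hτ + α * (1 - α) * τ * hD

lemma convexConjugate_le_of_smooth_along {E : (ι → ℝ) → ℝ} {p q σ : ι → ℝ} {L α : ℝ}
    (hα : α ∈ Icc (0 : ℝ) 1) (hp : BddAbove {y | ∃ u, y = p ⬝ᵥ u - E u})
    (hq : BddAbove {y | ∃ u, y = q ⬝ᵥ u - E u})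
    (hE : ∀ u x y, α * E (u + x • σ) + (1 - α) * E (u + y • σ)
      ≤ E (u + (α * x + (1 - α) * y) • σ) + L * (α * (1 - α) * (x - y) ^ 2)) :
    convexConjugate E (α • p + (1 - α) • q)
      ≤ α * convexConjugate E p + (1 - α) * convexConjugate E q
        - (1 / (2 * L)) / 2 * α * (1 - α) * ((p - q) ⬝ᵥ σ) ^ 2 :=
  csSup_le ⟨_, 0, rfl⟩ <| by
    rintro _ ⟨u, rfl⟩
    exact pairing_sub_le_of_smooth_along hα (fun u => le_csSup hp ⟨u, rfl⟩)
      (fun u => le_csSup hq ⟨u, rfl⟩) hE u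

lemma bddAbove_pairing_sub_surplus {μ : Measure (ι → ℝ)} [IsProbabilityMeasure μ]
    (hint : ∀ i, Integrable (fun x : ι → ℝ => x i) μ) {p : ι → ℝ} (hp1 : ∑ i, p i = 1)
    (hp0 : ∀ i, 0 ≤ p i) : BddAbove {y | ∃ u, y = p ⬝ᵥ u - surplus μ u} := by
  have : Nonempty ι := by
    by_contra h
    simp [not_nonempty_iff.1 h] at hp1
  refine ⟨-(p ⬝ᵥ fun i => ∫ x, x i ∂μ), ?_⟩
  rintro _ ⟨u, rfl⟩
  have hpt : ∀ x : ι → ℝ, ∑ i, p i * (u i + x i) ≤ ⨆ i, (u i + x i) := fun x =>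
    calc ∑ i, p i * (u i + x i) ≤ ∑ i, p i * ⨆ j, (u j + x j) :=
          Finset.sum_le_sum fun i _ => mul_le_mul_of_nonneg_left
            (le_ciSup (Set.finite_range fun j => u j + x j).bddAbove i) (hp0 i)
      _ = ⨆ i, (u i + x i) := by rw [← Finset.sum_mul, hp1, one_mul]
  have hterm : ∀ i, Integrable (fun x : ι → ℝ => p i * (u i + x i)) μ :=
    fun i => ((integrable_const _).add (hint i)).const_mul _
  have hmean : ∫ x, ∑ i, p i * (u i + x i) ∂μ = p ⬝ᵥ u + p ⬝ᵥ fun i => ∫ x, x i ∂μ := by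
    rw [integral_finsetSum _ fun i _ => hterm i, dotProduct, dotProduct,
      ← Finset.sum_add_distrib]
    refine Finset.sum_congr rfl fun i _ => ?_
    rw [integral_const_mul, integral_add (integrable_const _) (hint i)]
    simp [mul_add]
  have hsup : Integrable (fun x : ι → ℝ => ⨆ i, (u i + x i)) μ :=
    (integrable_finset_sup'_add hint Finset.univ_nonempty u).congr
      (.of_forall fun x => Finset.sup'_univ_eq_ciSup _)
  have := integral_mono (integrable_finsetSum _ fun i _ => hterm i) hsup hpt
  rw [surplus]
  linarith

lemma exists_lt_of_sum_eq_of_ne {p q : ι → ℝ} (hsum : ∑ i, p i = ∑ i, q i) (hne : p ≠ q) :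
    ∃ i, p i < q i := by
  by_contra! h
  exact hne (funext fun i =>
    ((Finset.sum_eq_sum_iff_of_le fun i _ => h i).1 hsum.symm i (Finset.mem_univ i)).symm)

variable [DecidableEq ι]

def signVec (P : Finset ι) (i : ι) : ℝ := if i ∈ P then 1 else -1

lemma iSup_add_smul_signVec {P : Finset ι} (hP : P.Nonempty) (hPc : Pᶜ.Nonempty)
    (u x : ι → ℝ) (t : ℝ) :
    ⨆ i, ((u + t • signVec P) i + x i)
      = max (P.sup' hP (u + x) + t) (Pᶜ.sup' hPc (u + x) - t) := by
  have : Nonempty ι := hP.to_subtype.map Subtype.val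
  set f := fun i => (u + t • signVec P) i + x i
  calc ⨆ i, f i = (P ∪ Pᶜ).sup' (hP.mono Finset.subset_union_left) f := by
        rw [← Finset.sup'_univ_eq_ciSup]
        exact Finset.sup'_congr _ (Finset.union_compl P).symm fun _ _ => rfl
    _ = max (P.sup' hP f) (Pᶜ.sup' hPc f) := Finset.sup'_union hP hPc f
    _ = _ := by
      rw [Finset.sup'_add, sub_eq_add_neg, Finset.sup'_add]
      congr 1 <;> refine Finset.sup'_congr _ rfl fun i hi => ?_
      · simp [f, signVec, hi]; ring
      · simp [f, signVec, Finset.mem_compl.1 hi]; ring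

section
variable {μ : Measure (ι → ℝ)} [IsFiniteMeasure μ] {P : Finset ι}

lemma surplus_add_smul_signVec (hint : ∀ i, Integrable (fun x : ι → ℝ => x i) μ)
    (hP : P.Nonempty) (hPc : Pᶜ.Nonempty) (u : ι → ℝ) (t : ℝ) :
    surplus μ (u + t • signVec P)
      = ∫ x, (P.sup' hP (u + x) + Pᶜ.sup' hPc (u + x)) / 2 ∂μ
        + ∫ x, |t - (Pᶜ.sup' hPc (u + x) - P.sup' hP (u + x)) / 2| ∂μ := by
  have hA := integrable_finset_sup'_add hint hP u
  have hB := integrable_finset_sup'_add hint hPc u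
  simp only [surplus, iSup_add_smul_signVec hP hPc, max_add_sub_eq]
  exact integral_add ((hA.add hB).div_const 2)
    ((integrable_const t).sub ((hB.sub hA).div_const 2)).abs

lemma measureReal_sup'_sub_sup'_mem_Ioc_le (hP : P.Nonempty) (hPc : Pᶜ.Nonempty) {B : ι → ι → ℝ}
    (hB : ∀ i ∈ P, ∀ j ∈ Pᶜ, ∀ a b, a ≤ b →
      μ.real {x | x j - x i ∈ Ioc a b} ≤ B i j * (b - a))
    (u : ι → ℝ) {r r' : ℝ} (hr : r ≤ r') :
    μ.real {x | (Pᶜ.sup' hPc (u + x) - P.sup' hP (u + x)) / 2 ∈ Ioc r r'}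
      ≤ 2 * (∑ i ∈ P, ∑ j ∈ Pᶜ, B i j) * (r' - r) := by
  have hcover : {x | (Pᶜ.sup' hPc (u + x) - P.sup' hP (u + x)) / 2 ∈ Ioc r r'}
      ⊆ ⋃ i ∈ P, ⋃ j ∈ Pᶜ,
        {x | x j - x i ∈ Ioc (2 * r - (u j - u i)) (2 * r' - (u j - u i))} := by
    intro x hx
    obtain ⟨i, hi, hAi⟩ := Finset.exists_mem_eq_sup' hP (u + x)
    obtain ⟨j, hj, hBj⟩ := Finset.exists_mem_eq_sup' hPc (u + x)
    obtain ⟨hrx, hxr⟩ : r < _ ∧ _ ≤ r' := hx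
    rw [hAi, hBj] at hrx hxr
    simp only [Pi.add_apply] at hrx hxr
    simp only [mem_iUnion]
    exact ⟨i, hi, j, hj, by constructor <;> linarith⟩
  calc _ ≤ _ := measureReal_mono hcover (measure_ne_top _ _)
    _ ≤ ∑ i ∈ P, ∑ j ∈ Pᶜ,
          μ.real {x | x j - x i ∈ Ioc (2 * r - (u j - u i)) (2 * r' - (u j - u i))} :=
        (measureReal_biUnion_finset_le _ _).trans
          (Finset.sum_le_sum fun i _ => measureReal_biUnion_finset_le _ _)
    _ ≤ ∑ i ∈ P, ∑ j ∈ Pᶜ, B i j * (2 * (r' - r)) :=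
        Finset.sum_le_sum fun i hi => Finset.sum_le_sum fun j hj =>
          (hB i hi j hj _ _ (by linarith)).trans_eq (by ring)
    _ = _ := by simp only [← Finset.sum_mul]; ring

lemma surplus_smooth_along_signVec (hint : ∀ i, Integrable (fun x : ι → ℝ => x i) μ)
    (hP : P.Nonempty) (hPc : Pᶜ.Nonempty) {B : ι → ι → ℝ}
    (hB : ∀ i ∈ P, ∀ j ∈ Pᶜ, ∀ a b, a ≤ b →
      μ.real {x | x j - x i ∈ Ioc a b} ≤ B i j * (b - a))
    {L : ℝ} (hL : 2 * ∑ i ∈ P, ∑ j ∈ Pᶜ, B i j ≤ L) {α : ℝ} (hα : α ∈ Icc (0 : ℝ) 1)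
    (u : ι → ℝ) (x y : ℝ) :
    α * surplus μ (u + x • signVec P) + (1 - α) * surplus μ (u + y • signVec P)
      ≤ surplus μ (u + (α * x + (1 - α) * y) • signVec P) + L * (α * (1 - α) * (x - y) ^ 2) := by
  simp only [surplus_add_smul_signVec hint hP hPc]
  have := convex_comb_integral_abs_sub_le
    (V := fun x => (Pᶜ.sup' hPc (u + x) - P.sup' hP (u + x)) / 2) (S := L)
    (((measurable_finset_sup'_add hPc u).sub (measurable_finset_sup'_add hP u)).div_const 2)
    (((integrable_finset_sup'_add hint hPc u).sub
      (integrable_finset_sup'_add hint hP u)).div_const 2)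
    (fun r r' hr => (measureReal_sup'_sub_sup'_mem_Ioc_le hP hPc hB u hr).trans
      (mul_le_mul_of_nonneg_right hL (sub_nonneg.2 hr))) hα x y
  linarith

end

lemma sum_sum_compl_add_le {M : ι → ι → ℝ} (hM : ∀ i j, i ≠ j → 0 ≤ M i j) (P : Finset ι) :
    ∑ i ∈ P, ∑ j ∈ Pᶜ, (M i j + M j i) ≤ ∑ i, ∑ j ∈ Finset.univ.erase i, M i j := by
  have hrow : ∀ {s : Finset ι} {i}, i ∉ s → ∑ j ∈ s, M i j ≤ ∑ j ∈ Finset.univ.erase i, M i j :=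
    fun hi => Finset.sum_le_sum_of_subset_of_nonneg
      (fun j hj => Finset.mem_erase.2 ⟨fun h => hi (h ▸ hj), Finset.mem_univ j⟩)
      fun j hj _ => hM _ j (Finset.ne_of_mem_erase hj).symm
  rw [← Finset.sum_add_sum_compl P, Finset.sum_congr rfl fun i _ => Finset.sum_add_distrib,
    Finset.sum_add_distrib]
  conv_lhs => arg 2; rw [Finset.sum_comm]
  exact add_le_add (Finset.sum_le_sum fun i hi => hrow (Finset.notMem_compl.2 hi))
    (Finset.sum_le_sum fun j hj => hrow (Finset.mem_compl.1 hj))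

lemma sub_dotProduct_signVec_filter_le (p q : ι → ℝ) :
    (p - q) ⬝ᵥ signVec {i | q i ≤ p i} = ∑ i, |p i - q i| := by
  refine Finset.sum_congr rfl fun i _ => ?_
  by_cases h : q i ≤ p i
  · simp [signVec, h, abs_of_nonneg (sub_nonneg.2 h)]
  · simp [signVec, h, abs_of_neg (sub_neg.2 (not_le.1 h))]

end Surplus

theorem conjugate_strongly_convex_of_modes_general
    (n : ℕ)
    (μ : Measure (Fin n → ℝ)) [IsProbabilityMeasure μ]
    (hint : ∀ i : Fin n, Integrable (fun x : Fin n → ℝ => x i) μ)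
    (E : (Fin n → ℝ) → ℝ)
    (hE : ∀ u : Fin n → ℝ, E u = ∫ x, (⨆ i : Fin n, (u i + x i)) ∂μ)
    (Estar : (Fin n → ℝ) → ℝ)
    (hEstar : ∀ p : Fin n → ℝ,
      Estar p = sSup {y : ℝ | ∃ u : Fin n → ℝ, y = ∑ i, p i * u i - E u})
    (g : Fin n → Fin n → ℝ → ℝ)
    (hg : ∀ i j, i ≠ j →
      μ.map (fun x : Fin n → ℝ => x j - x i)
        = (volume : Measure ℝ).withDensity (fun z => ENNReal.ofReal (g i j z)))
    (zbar : Fin n → Fin n → ℝ)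
    (hmode : ∀ i j, i ≠ j → ∀ z, g i j z ≤ g i j (zbar i j)) :
    ∀ p ∈ {p : Fin n → ℝ | ∑ i, p i = 1 ∧ ∀ i, 0 ≤ p i},
    ∀ q ∈ {p : Fin n → ℝ | ∑ i, p i = 1 ∧ ∀ i, 0 ≤ p i},
    ∀ α ∈ Set.Icc (0 : ℝ) 1,
      Estar (α • p + (1 - α) • q)
        ≤ α * Estar p + (1 - α) * Estar q
          - (1 / (2 * ∑ i, ∑ j ∈ Finset.univ.erase i, g i j (zbar i j))) / 2
            * α * (1 - α) * (∑ i, |p i - q i|) ^ 2 := by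
  rintro p ⟨hp1, hp0⟩ q ⟨hq1, hq0⟩ α hα
  obtain rfl : E = surplus μ := funext hE
  obtain rfl : Estar = convexConjugate (surplus μ) := funext hEstar
  have hz : ∀ i j, i ≠ j → 0 ≤ g i j (zbar i j) := fun i j hij =>
    (pos_of_withDensity_ne_zero (hmode i j hij) (hg i j hij ▸
      (Measure.map_ne_zero_iff (by fun_prop)).2 (IsProbabilityMeasure.ne_zero μ))).le
  by_cases hpq : p = q
  · subst hpq
    rw [← add_smul, add_sub_cancel, one_smul]
    simp only [sub_self, abs_zero, Finset.sum_const_zero]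
    linarith
  obtain ⟨i, hi⟩ := exists_lt_of_sum_eq_of_ne (hq1.trans hp1.symm) (Ne.symm hpq)
  obtain ⟨j, hj⟩ := exists_lt_of_sum_eq_of_ne (hp1.trans hq1.symm) hpq
  rw [← sub_dotProduct_signVec_filter_le]
  refine convexConjugate_le_of_smooth_along hα (bddAbove_pairing_sub_surplus hint hp1 hp0)
    (bddAbove_pairing_sub_surplus hint hq1 hq0)
    (surplus_smooth_along_signVec hint ⟨i, by simpa using hi.le⟩ ⟨j, by simpa using hj⟩
      (fun i hi j hj _ _ hab => measureReal_sub_mem_Ioc_le hg hmode hz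
        (fun h => Finset.mem_compl.1 hj (h ▸ hi)) hab) ?_ hα)
  simpa only [Finset.mul_sum, mul_div_cancel₀ _ (two_ne_zero' ℝ)] using sum_sum_compl_add_le hz _

/-- Strong convexity of `E*` under modal bounds on differences of utility
shocks: if for each pair `i ≠ j` the difference `ε⁽ʲ⁾ − ε⁽ⁱ⁾` has a density `g i j` with
mode `z̄ i j`, then `E*` is `β`-strongly convex on `Δ` w.r.t. the `ℓ1`-norm with
`β = 1 / (2 ∑_i ∑_{j≠i} g_{i,j}(z̄_{i,j}))`. -/
theorem conjugate_strongly_convex_of_modes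
    (n : ℕ) (hn : 2 ≤ n)
    (μ : Measure (Fin n → ℝ)) [IsProbabilityMeasure μ]
    (hint : ∀ i : Fin n, Integrable (fun x : Fin n → ℝ => x i) μ)
    (hac : μ ≪ (volume : Measure (Fin n → ℝ)))
    (hsupp : ∀ U : Set (Fin n → ℝ), IsOpen U → U.Nonempty → 0 < μ U)
    (E : (Fin n → ℝ) → ℝ)
    (hE : ∀ u : Fin n → ℝ, E u = ∫ x, (⨆ i : Fin n, (u i + x i)) ∂μ)
    (Estar : (Fin n → ℝ) → ℝ)
    (hEstar : ∀ p : Fin n → ℝ,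
      Estar p = sSup {y : ℝ | ∃ u : Fin n → ℝ, y = ∑ i, p i * u i - E u})
    (g : Fin n → Fin n → ℝ → ℝ)
    (hg0 : ∀ i j, i ≠ j → ∀ z, 0 ≤ g i j z)
    (hg : ∀ i j, i ≠ j →
      μ.map (fun x : Fin n → ℝ => x j - x i)
        = (volume : Measure ℝ).withDensity (fun z => ENNReal.ofReal (g i j z)))
    (zbar : Fin n → Fin n → ℝ)
    (hmode : ∀ i j, i ≠ j → ∀ z, g i j z ≤ g i j (zbar i j)) :
    ∀ p ∈ {p : Fin n → ℝ | ∑ i, p i = 1 ∧ ∀ i, 0 ≤ p i},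
    ∀ q ∈ {p : Fin n → ℝ | ∑ i, p i = 1 ∧ ∀ i, 0 ≤ p i},
    ∀ α ∈ Set.Icc (0 : ℝ) 1,
      Estar (α • p + (1 - α) • q)
        ≤ α * Estar p + (1 - α) * Estar q
          - (1 / (2 * ∑ i, ∑ j ∈ Finset.univ.erase i, g i j (zbar i j))) / 2
            * α * (1 - α) * (∑ i, |p i - q i|) ^ 2 :=
  conjugate_strongly_convex_of_modes_general n μ hint E hE Estar hEstar g hg zbar hmode
end

section
/- Strong convexity of E* for IID utility shocks: suppose the coordinates ε⁽¹⁾, …, ε⁽ⁿ⁾ are independent and identically distributed, each with a common probability density function f on ℝ that attains its maximum at a mode z̄ ∈ ℝ (so f(z) ≤ f(z̄) for all z ∈ ℝ). Then the convex conjugate E* is β-strongly convex on Δ with respect to the ℓ1-norm with convexity parameter β = 1 / (2 n (n−1) f(z̄)). -/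
open MeasureTheory

namespace SCIID

variable {n : ℕ}

/-- The set of indices attaining the max of `i ↦ a i + x i` is a nonempty finset. -/
lemma filter_argmax_nonempty (hn : 0 < n) (a x : Fin n → ℝ) :
    (Finset.univ.filter (fun i => ∀ j, a j + x j ≤ a i + x i)).Nonempty := by
  haveI : NeZero n := ⟨hn.ne'⟩
  obtain ⟨b, -, hb⟩ := Finset.exists_max_image Finset.univ (fun i => a i + x i)
    ⟨0, Finset.mem_univ 0⟩
  exact ⟨b, Finset.mem_filter.2 ⟨Finset.mem_univ b, fun j => hb j (Finset.mem_univ j)⟩⟩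

/-- A measurable selection of an argmax index. -/
noncomputable def selIdx (hn : 0 < n) (a x : Fin n → ℝ) : Fin n :=
  (Finset.univ.filter (fun i => ∀ j, a j + x j ≤ a i + x i)).min'
    (filter_argmax_nonempty hn a x)

lemma selIdx_le (hn : 0 < n) (a x : Fin n → ℝ) (j : Fin n) :
    a j + x j ≤ a (selIdx hn a x) + x (selIdx hn a x) := by
  have h := Finset.min'_mem _ (filter_argmax_nonempty hn a x)
  exact (Finset.mem_filter.1 h).2 j

lemma selIdx_eq_iff (hn : 0 < n) (a x : Fin n → ℝ) (i : Fin n) :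
    selIdx hn a x = i ↔
      (∀ k, a k + x k ≤ a i + x i) ∧
        ∀ j, (∀ k, a k + x k ≤ a j + x j) → i ≤ j := by
  constructor
  · rintro rfl
    refine ⟨selIdx_le hn a x, fun j hj => ?_⟩
    exact Finset.min'_le _ _ (Finset.mem_filter.2 ⟨Finset.mem_univ j, hj⟩)
  · rintro ⟨h1, h2⟩
    refine le_antisymm (Finset.min'_le _ _ (Finset.mem_filter.2 ⟨Finset.mem_univ i, h1⟩)) ?_
    exact h2 _ (selIdx_le hn a x)

lemma measurableSet_selIdx (hn : 0 < n) (a : Fin n → ℝ) (i : Fin n) :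
    MeasurableSet {x : Fin n → ℝ | selIdx hn a x = i} := by
  have hP : ∀ j : Fin n, MeasurableSet {x : Fin n → ℝ | ∀ k, a k + x k ≤ a j + x j} := by
    intro j
    have : {x : Fin n → ℝ | ∀ k, a k + x k ≤ a j + x j}
        = ⋂ k, {x : Fin n → ℝ | a k + x k ≤ a j + x j} := by
      ext y; simp
    rw [this]
    exact MeasurableSet.iInter fun k =>
      measurableSet_le ((measurable_pi_apply k).const_add _) ((measurable_pi_apply j).const_add _)
  have : {x : Fin n → ℝ | selIdx hn a x = i}
      = {x : Fin n → ℝ | ∀ k, a k + x k ≤ a i + x i} ∩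
        ⋂ j, {x : Fin n → ℝ | (∀ k, a k + x k ≤ a j + x j) → i ≤ j} := by
    ext y
    simp only [Set.mem_setOf_eq, Set.mem_inter_iff, Set.mem_iInter, selIdx_eq_iff hn a y i]
  rw [this]
  refine (hP i).inter (MeasurableSet.iInter fun j => ?_)
  by_cases hij : i ≤ j
  · have : {x : Fin n → ℝ | (∀ k, a k + x k ≤ a j + x j) → i ≤ j} = Set.univ := by
      ext y; simp [hij]
    rw [this]; exact MeasurableSet.univ
  · have : {x : Fin n → ℝ | (∀ k, a k + x k ≤ a j + x j) → i ≤ j}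
        = {x : Fin n → ℝ | ∀ k, a k + x k ≤ a j + x j}ᶜ := by
      ext y; simp [hij]
    rw [this]; exact (hP j).compl

lemma measurable_selIdx (hn : 0 < n) (a : Fin n → ℝ) :
    Measurable (fun x => selIdx hn a x) :=
  measurable_to_countable' fun i => measurableSet_selIdx hn a i

lemma measurable_comp_selIdx (hn : 0 < n) (a : Fin n → ℝ) (d : Fin n → ℝ) :
    Measurable (fun x => d (selIdx hn a x)) :=
  (measurable_of_finite d).comp (measurable_selIdx hn a)

lemma iSup_eq_selIdx (hn : 0 < n) (a x : Fin n → ℝ) :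
    (⨆ i, (a i + x i)) = a (selIdx hn a x) + x (selIdx hn a x) := by
  haveI : Nonempty (Fin n) := ⟨⟨0, hn⟩⟩
  apply le_antisymm
  · exact ciSup_le (selIdx_le hn a x)
  · exact le_ciSup (f := fun i => a i + x i) (Set.Finite.bddAbove (Set.finite_range _))
      (selIdx hn a x)

lemma measurable_iSup_add (hn : 0 < n) (a : Fin n → ℝ) :
    Measurable (fun x : Fin n → ℝ => ⨆ i, (a i + x i)) := by
  classical
  have heq : (fun x : Fin n → ℝ => ⨆ i, (a i + x i))
      = fun x => ∑ i, if selIdx hn a x = i then a i + x i else 0 := by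
    funext x
    rw [iSup_eq_selIdx hn a x, Finset.sum_ite_eq]
    simp
  rw [heq]
  exact Finset.measurable_sum _ fun i _ =>
    Measurable.ite (measurableSet_selIdx hn a i)
      ((measurable_pi_apply i).const_add _) measurable_const


noncomputable def nu (f : ℝ → ℝ) : Measure ℝ :=
  (volume : Measure ℝ).withDensity (fun z => ENNReal.ofReal (f z))

lemma nu_Icc_le (f : ℝ → ℝ) (F : ℝ) (hF : 0 ≤ F) (hmode : ∀ z, f z ≤ F) (a b : ℝ) :
    nu f (Set.Icc a b) ≤ ENNReal.ofReal (F * (b - a)) := by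
  rw [nu, withDensity_apply _ measurableSet_Icc]
  calc ∫⁻ z in Set.Icc a b, ENNReal.ofReal (f z)
      ≤ ∫⁻ _ in Set.Icc a b, ENNReal.ofReal F :=
        lintegral_mono fun z => ENNReal.ofReal_le_ofReal (hmode z)
    _ = ENNReal.ofReal F * volume (Set.Icc a b) := setLIntegral_const _ _
    _ = ENNReal.ofReal F * ENNReal.ofReal (b - a) := by rw [Real.volume_Icc]
    _ = ENNReal.ofReal (F * (b - a)) := (ENNReal.ofReal_mul hF).symm

lemma map_pair {n : ℕ} (f : ℝ → ℝ) [SigmaFinite (nu f)]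
    (hone : nu f Set.univ = 1) {i j : Fin n} (hij : i ≠ j) :
    ((Measure.pi (fun _ : Fin n => nu f)).map (fun x => (x i, x j)))
      = (nu f).prod (nu f) := by
  classical
  refine (Measure.prod_eq fun s t hs ht => ?_).symm
  have hmeas : Measurable (fun x : Fin n → ℝ => (x i, x j)) :=
    (measurable_pi_apply i).prodMk (measurable_pi_apply j)
  rw [Measure.map_apply hmeas (hs.prod ht)]
  have hpre : (fun x : Fin n → ℝ => (x i, x j)) ⁻¹' (s ×ˢ t)
      = Set.pi Set.univ (fun k => if k = i then s else if k = j then t else Set.univ) := by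
    ext y
    simp only [Set.mem_preimage, Set.mem_prod, Set.mem_pi, Set.mem_univ, forall_true_left]
    constructor
    · rintro ⟨h1, h2⟩ k
      by_cases hki : k = i
      · subst hki; simp [h1]
      · by_cases hkj : k = j
        · subst hkj; simp [hki, h2]
        · simp [hki, hkj]
    · intro h
      constructor
      · have := h i; simpa using this
      · have := h j
        rw [if_neg (Ne.symm hij), if_pos rfl] at this
        exact this
  rw [hpre, Measure.pi_pi]
  have hval : ∀ k : Fin n, nu f (if k = i then s else if k = j then t else Set.univ)
      = if k = i then nu f s else if k = j then nu f t else 1 := by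
    intro k
    by_cases hki : k = i
    · simp [hki]
    · by_cases hkj : k = j
      · simp [hki, hkj, Ne.symm hij]
      · simp [hki, hkj, hone]
  simp_rw [hval]
  rw [← Finset.mul_prod_erase Finset.univ _ (Finset.mem_univ i)]
  have hj' : j ∈ Finset.univ.erase i := Finset.mem_erase.2 ⟨hij.symm, Finset.mem_univ j⟩
  rw [← Finset.mul_prod_erase _ _ hj']
  rw [if_pos rfl, if_neg hij.symm, if_pos rfl]
  have : ∀ k ∈ (Finset.univ.erase i).erase j,
      (if k = i then nu f s else if k = j then nu f t else 1) = 1 := by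
    intro k hk
    have hki : k ≠ i := Finset.ne_of_mem_erase (Finset.mem_of_mem_erase hk)
    have hkj : k ≠ j := Finset.ne_of_mem_erase hk
    simp [hki, hkj]
  rw [Finset.prod_congr rfl this, Finset.prod_const_one, mul_one]

lemma pair_prob_bound {n : ℕ} (f : ℝ → ℝ) (F : ℝ) (hF : 0 ≤ F) (hmode : ∀ z, f z ≤ F)
    [SigmaFinite (nu f)] (hone : nu f Set.univ = 1)
    {i j : Fin n} (hij : i ≠ j) (r s : ℝ) :
    (Measure.pi (fun _ : Fin n => nu f)) {x | x i - x j ∈ Set.Icc r s}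
      ≤ ENNReal.ofReal (F * (s - r)) := by
  have hmeas : Measurable (fun x : Fin n → ℝ => (x i, x j)) :=
    (measurable_pi_apply i).prodMk (measurable_pi_apply j)
  have hC : MeasurableSet {p : ℝ × ℝ | p.1 - p.2 ∈ Set.Icc r s} :=
    (measurable_fst.sub measurable_snd) measurableSet_Icc
  have hrw : {x : Fin n → ℝ | x i - x j ∈ Set.Icc r s}
      = (fun x : Fin n → ℝ => (x i, x j)) ⁻¹' {p : ℝ × ℝ | p.1 - p.2 ∈ Set.Icc r s} := rfl
  rw [hrw, ← Measure.map_apply hmeas hC, map_pair f hone hij]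
  rw [Measure.prod_apply hC]
  have hsec : ∀ a : ℝ, (Prod.mk a ⁻¹' {p : ℝ × ℝ | p.1 - p.2 ∈ Set.Icc r s})
      = Set.Icc (a - s) (a - r) := by
    intro a
    ext b
    simp only [Set.mem_preimage, Set.mem_setOf_eq, Set.mem_Icc]
    constructor <;> intro h <;> constructor <;> linarith [h.1, h.2]
  calc ∫⁻ a, nu f (Prod.mk a ⁻¹' {p : ℝ × ℝ | p.1 - p.2 ∈ Set.Icc r s}) ∂(nu f)
      ≤ ∫⁻ _, ENNReal.ofReal (F * (s - r)) ∂(nu f) := by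
        refine lintegral_mono fun a => ?_
        rw [hsec a]
        refine (nu_Icc_le f F hF hmode _ _).trans_eq ?_
        congr 1
        ring
    _ = ENNReal.ofReal (F * (s - r)) := by rw [lintegral_const, hone, mul_one]

lemma sigmaFinite_nu (f : ℝ → ℝ) (F : ℝ) (hF : 0 ≤ F) (hmode : ∀ z, f z ≤ F) :
    SigmaFinite (nu f) := by
  refine ⟨⟨{ set := fun k => Set.Icc (-(k : ℝ)) k
             set_mem := fun _ => trivial
             finite := fun k => lt_of_le_of_lt (nu_Icc_le f F hF hmode _ _)
               ENNReal.ofReal_lt_top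
             spanning := ?_ }⟩⟩
  ext x
  simp only [Set.mem_iUnion, Set.mem_Icc, Set.mem_univ, iff_true]
  obtain ⟨k, hk⟩ := exists_nat_ge |x|
  obtain ⟨h1, h2⟩ := abs_le.1 hk
  exact ⟨k, h1, h2⟩


lemma nu_univ_eq_one {n : ℕ} (hn : 0 < n) (f : ℝ → ℝ) (F : ℝ) (hF : 0 ≤ F)
    (hmode : ∀ z, f z ≤ F)
    (hprob : IsProbabilityMeasure (Measure.pi (fun _ : Fin n => nu f))) :
    nu f Set.univ = 1 := by
  haveI : SigmaFinite (nu f) := sigmaFinite_nu f F hF hmode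
  have h : (nu f Set.univ) ^ n = 1 := by
    have := Measure.pi_univ (fun _ : Fin n => nu f)
    rw [hprob.measure_univ] at this
    symm at this
    rw [Finset.prod_const, Finset.card_univ, Fintype.card_fin] at this
    exact this
  by_contra hne
  rcases lt_or_gt_of_ne hne with hlt | hgt
  · have : (nu f Set.univ) ^ n < 1 := pow_lt_one' hlt hn.ne'
    rw [h] at this; exact lt_irrefl _ this
  · have : (1 : ENNReal) < (nu f Set.univ) ^ n := one_lt_pow₀ hgt hn.ne'
    rw [h] at this; exact lt_irrefl _ this


lemma integrable_isup {n : ℕ} (hn : 0 < n) (μ : Measure (Fin n → ℝ)) [IsProbabilityMeasure μ]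
    (hint : ∀ i : Fin n, Integrable (fun x : Fin n → ℝ => x i) μ) (v : Fin n → ℝ) :
    Integrable (fun x : Fin n → ℝ => ⨆ i, (v i + x i)) μ := by
  haveI : Nonempty (Fin n) := ⟨⟨0, hn⟩⟩
  have hg : Integrable (fun x : Fin n → ℝ => ∑ i, (|v i| + |x i|)) μ :=
    integrable_finset_sum _ fun i _ => (integrable_const _).add (hint i).abs
  refine Integrable.mono' hg ((measurable_iSup_add hn v).aestronglyMeasurable) ?_
  refine Filter.Eventually.of_forall fun x => ?_
  rw [Real.norm_eq_abs, abs_le]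
  have hterm : ∀ i : Fin n, |v i| + |x i| ≤ ∑ k, (|v k| + |x k|) := fun i =>
    Finset.single_le_sum (f := fun k => |v k| + |x k|)
      (fun k _ => add_nonneg (abs_nonneg _) (abs_nonneg _)) (Finset.mem_univ i)
  constructor
  · have h0 : v (⟨0, hn⟩ : Fin n) + x ⟨0, hn⟩ ≤ ⨆ i, (v i + x i) :=
      le_ciSup (f := fun i => v i + x i) (Set.Finite.bddAbove (Set.finite_range _)) _
    have h1 : -(|v (⟨0, hn⟩ : Fin n)| + |x ⟨0, hn⟩|) ≤ v ⟨0, hn⟩ + x ⟨0, hn⟩ := by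
      have := abs_add_le (v (⟨0, hn⟩ : Fin n)) (x ⟨0, hn⟩)
      have := neg_abs_le (v (⟨0, hn⟩ : Fin n) + x ⟨0, hn⟩)
      have := abs_add_le (v (⟨0, hn⟩ : Fin n)) (x ⟨0, hn⟩)
      nlinarith [abs_add_le (v (⟨0, hn⟩ : Fin n)) (x ⟨0, hn⟩),
        neg_abs_le (v (⟨0, hn⟩ : Fin n) + x ⟨0, hn⟩)]
    have := hterm ⟨0, hn⟩
    linarith
  · refine ciSup_le fun i => ?_
    have h1 : v i + x i ≤ |v i| + |x i| :=
      (le_abs_self _).trans (abs_add_le _ _)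
    exact h1.trans (hterm i)

/-- The shifted utility vector. -/
def shift {n : ℕ} (u h : Fin n → ℝ) (t : ℝ) : Fin n → ℝ := fun i => u i + t * h i

lemma integrable_comp_selIdx {n : ℕ} (hn : 0 < n) (μ : Measure (Fin n → ℝ))
    [IsProbabilityMeasure μ] (a d : Fin n → ℝ) :
    Integrable (fun x : Fin n → ℝ => d (selIdx hn a x)) μ := by
  refine Integrable.mono' (integrable_const (∑ i, |d i|))
    ((measurable_comp_selIdx hn a d).aestronglyMeasurable)
    (Filter.Eventually.of_forall fun x => ?_)
  rw [Real.norm_eq_abs]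
  exact Finset.single_le_sum (f := fun i => |d i|) (fun k _ => abs_nonneg _)
    (Finset.mem_univ _)

lemma step_upper {n : ℕ} (hn : 0 < n) (μ : Measure (Fin n → ℝ)) [IsProbabilityMeasure μ]
    (hint : ∀ i : Fin n, Integrable (fun x : Fin n → ℝ => x i) μ)
    (u h : Fin n → ℝ) {w v : ℝ} (hwv : w ≤ v) :
    (∫ x, ⨆ i, (shift u h v i + x i) ∂μ) - (∫ x, ⨆ i, (shift u h w i + x i) ∂μ)
      ≤ (v - w) * ∫ x, h (selIdx hn (shift u h v) x) ∂μ := by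
  haveI : Nonempty (Fin n) := ⟨⟨0, hn⟩⟩
  have hiv := integrable_isup hn μ hint (shift u h v)
  have hiw := integrable_isup hn μ hint (shift u h w)
  have hid := integrable_comp_selIdx hn μ (shift u h v) h
  have key : ∀ x, (⨆ i, (shift u h v i + x i))
      ≤ (⨆ i, (shift u h w i + x i)) + (v - w) * h (selIdx hn (shift u h v) x) := by
    intro x
    rw [iSup_eq_selIdx hn (shift u h v) x]
    have h2 : shift u h w (selIdx hn (shift u h v) x) + x (selIdx hn (shift u h v) x)
        ≤ ⨆ i, (shift u h w i + x i) :=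
      le_ciSup (f := fun i => shift u h w i + x i)
        (Set.Finite.bddAbove (Set.finite_range _)) _
    have h3 : shift u h v (selIdx hn (shift u h v) x)
        = shift u h w (selIdx hn (shift u h v) x)
          + (v - w) * h (selIdx hn (shift u h v) x) := by
      simp only [shift]; ring
    linarith
  have hsum : Integrable (fun x : Fin n → ℝ =>
      (⨆ i, (shift u h w i + x i)) + (v - w) * h (selIdx hn (shift u h v) x)) μ :=
    hiw.add (hid.const_mul (v - w))
  have hmono := integral_mono hiv hsum (fun x => key x)
  rw [integral_add hiw (hid.const_mul (v - w)), integral_const_mul] at hmono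
  linarith

lemma step_lower {n : ℕ} (hn : 0 < n) (μ : Measure (Fin n → ℝ)) [IsProbabilityMeasure μ]
    (hint : ∀ i : Fin n, Integrable (fun x : Fin n → ℝ => x i) μ)
    (u h : Fin n → ℝ) {w v : ℝ} (hwv : w ≤ v) :
    (v - w) * ∫ x, h (selIdx hn (shift u h w) x) ∂μ
      ≤ (∫ x, ⨆ i, (shift u h v i + x i) ∂μ) - (∫ x, ⨆ i, (shift u h w i + x i) ∂μ) := by
  haveI : Nonempty (Fin n) := ⟨⟨0, hn⟩⟩
  have hiv := integrable_isup hn μ hint (shift u h v)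
  have hiw := integrable_isup hn μ hint (shift u h w)
  have hid := integrable_comp_selIdx hn μ (shift u h w) h
  have key : ∀ x, (⨆ i, (shift u h w i + x i)) + (v - w) * h (selIdx hn (shift u h w) x)
      ≤ ⨆ i, (shift u h v i + x i) := by
    intro x
    rw [iSup_eq_selIdx hn (shift u h w) x]
    have h2 : shift u h v (selIdx hn (shift u h w) x) + x (selIdx hn (shift u h w) x)
        ≤ ⨆ i, (shift u h v i + x i) :=
      le_ciSup (f := fun i => shift u h v i + x i)
        (Set.Finite.bddAbove (Set.finite_range _)) _
    have h3 : shift u h v (selIdx hn (shift u h w) x)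
        = shift u h w (selIdx hn (shift u h w) x)
          + (v - w) * h (selIdx hn (shift u h w) x) := by
      simp only [shift]; ring
    linarith
  have hsum : Integrable (fun x : Fin n → ℝ =>
      (⨆ i, (shift u h w i + x i)) + (v - w) * h (selIdx hn (shift u h w) x)) μ :=
    hiw.add (hid.const_mul (v - w))
  have hmono := integral_mono hsum hiv (fun x => key x)
  rw [integral_add hiw (hid.const_mul (v - w)), integral_const_mul] at hmono
  linarith

lemma gauss_succ (N : ℕ) : ∑ k ∈ Finset.range N, ((k : ℝ) + 1) = N * (N + 1) / 2 := by
  induction N with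
  | zero => simp
  | succ m ih => rw [Finset.sum_range_succ, ih]; push_cast; ring

lemma gauss_id (N : ℕ) : ∑ k ∈ Finset.range N, (k : ℝ) = N * (N - 1) / 2 := by
  induction N with
  | zero => simp
  | succ m ih => rw [Finset.sum_range_succ, ih]; push_cast; ring

lemma chord_up (φ Ψ : ℝ → ℝ) (M : ℝ) (hM : 0 ≤ M)
    (hstepu : ∀ w v : ℝ, w ≤ v → φ v - φ w ≤ (v - w) * Ψ v)
    (hlip : ∀ w v : ℝ, w ≤ v → Ψ v - Ψ w ≤ M * (v - w))
    (b : ℝ) (hb : 0 ≤ b) (N : ℕ) (hN : 0 < N) :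
    φ b - φ 0 ≤ b * Ψ 0 + M * b ^ 2 * (N + 1) / (2 * N) := by
  have hNR : (0 : ℝ) < N := by exact_mod_cast hN
  set δ := b / N with hδdef
  have hδ : 0 ≤ δ := div_nonneg hb hNR.le
  have hNδ : (N : ℝ) * δ = b := by rw [hδdef]; field_simp
  have htel : φ b - φ 0 = ∑ k ∈ Finset.range N, (φ ((k + 1 : ℕ) * δ) - φ ((k : ℕ) * δ)) := by
    rw [Finset.sum_range_sub (fun k => φ ((k : ℕ) * δ))]
    rw [show ((N : ℝ) * δ) = b from hNδ]
    norm_num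
  have hstep : ∀ k ∈ Finset.range N,
      φ ((k + 1 : ℕ) * δ) - φ ((k : ℕ) * δ) ≤ δ * Ψ 0 + M * δ ^ 2 * ((k : ℝ) + 1) := by
    intro k _
    have h1 : ((k : ℝ) * δ) ≤ ((k : ℝ) + 1) * δ := by nlinarith
    have h2 := hstepu ((k : ℝ) * δ) (((k : ℝ) + 1) * δ) h1
    have h3 := hlip 0 (((k : ℝ) + 1) * δ) (by positivity)
    have h4 : (((k : ℝ) + 1) * δ - (k : ℝ) * δ) = δ := by ring
    push_cast
    nlinarith [hstepu ((k : ℝ) * δ) (((k : ℝ) + 1) * δ) h1]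
  calc φ b - φ 0 = ∑ k ∈ Finset.range N, (φ ((k + 1 : ℕ) * δ) - φ ((k : ℕ) * δ)) := htel
    _ ≤ ∑ k ∈ Finset.range N, (δ * Ψ 0 + M * δ ^ 2 * ((k : ℝ) + 1)) :=
        Finset.sum_le_sum hstep
    _ = (N : ℝ) * (δ * Ψ 0) + M * δ ^ 2 * ((N : ℝ) * (N + 1) / 2) := by
        rw [Finset.sum_add_distrib, Finset.sum_const, ← Finset.mul_sum, gauss_succ,
          Finset.card_range, nsmul_eq_mul]
    _ = b * Ψ 0 + M * b ^ 2 * (N + 1) / (2 * N) := by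
        rw [hδdef]; field_simp; try ring

lemma chord_down (φ Ψ : ℝ → ℝ) (M : ℝ) (hM : 0 ≤ M)
    (hstepl : ∀ w v : ℝ, w ≤ v → (v - w) * Ψ w ≤ φ v - φ w)
    (hlip : ∀ w v : ℝ, w ≤ v → Ψ v - Ψ w ≤ M * (v - w))
    (b : ℝ) (hb : 0 ≤ b) (N : ℕ) (hN : 0 < N) :
    b * Ψ 0 - M * b ^ 2 * (N + 1) / (2 * N) ≤ φ 0 - φ (-b) := by
  have hNR : (0 : ℝ) < N := by exact_mod_cast hN
  set δ := b / N with hδdef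
  have hδ : 0 ≤ δ := div_nonneg hb hNR.le
  have hNδ : (N : ℝ) * δ = b := by rw [hδdef]; field_simp
  have htel : φ 0 - φ (-b)
      = ∑ k ∈ Finset.range N, (φ (-b + (k + 1 : ℕ) * δ) - φ (-b + (k : ℕ) * δ)) := by
    rw [Finset.sum_range_sub (fun k => φ (-b + (k : ℕ) * δ))]
    rw [show (-b + (N : ℝ) * δ) = 0 by rw [hNδ]; ring]
    norm_num
  have hstep : ∀ k ∈ Finset.range N,
      δ * Ψ 0 - M * δ * (b - (k : ℝ) * δ)
        ≤ φ (-b + (k + 1 : ℕ) * δ) - φ (-b + (k : ℕ) * δ) := by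
    intro k hk
    have hkN : (k : ℝ) ≤ N := by
      have := Finset.mem_range.1 hk
      exact_mod_cast this.le
    have h1 : (-b + (k : ℝ) * δ) ≤ (-b + ((k : ℝ) + 1) * δ) := by nlinarith
    have h2 := hstepl (-b + (k : ℝ) * δ) (-b + ((k : ℝ) + 1) * δ) h1
    have hw0 : (-b + (k : ℝ) * δ) ≤ 0 := by nlinarith
    have h3 := hlip (-b + (k : ℝ) * δ) 0 hw0
    push_cast
    nlinarith
  have hsum := Finset.sum_le_sum hstep
  rw [← htel] at hsum
  refine le_trans (le_of_eq ?_) hsum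
  rw [Finset.sum_sub_distrib, Finset.sum_const, Finset.card_range]
  have : ∑ k ∈ Finset.range N, M * δ * (b - (k : ℝ) * δ)
      = M * δ * ((N : ℝ) * b) - M * δ ^ 2 * ((N : ℝ) * (N - 1) / 2) := by
    have h1 : ∀ k ∈ Finset.range N, M * δ * (b - (k : ℝ) * δ)
        = M * δ * b - M * δ ^ 2 * (k : ℝ) := by intro k _; ring
    rw [Finset.sum_congr rfl h1, Finset.sum_sub_distrib, Finset.sum_const, Finset.card_range,
      ← Finset.mul_sum, gauss_id]
    ring
  rw [this, hδdef]
  field_simp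
  linear_combination (-(2 * b * Ψ 0 * N)) * mul_inv_cancel₀ (ne_of_gt hNR)

lemma psi_lip {n : ℕ} (hn : 0 < n) (f : ℝ → ℝ) (F : ℝ) (hF : 0 ≤ F) (hmode : ∀ z, f z ≤ F)
    [SigmaFinite (nu f)] (hone : nu f Set.univ = 1)
    [IsProbabilityMeasure (Measure.pi (fun _ : Fin n => nu f))]
    (u d : Fin n → ℝ) (hd : ∀ i, d i = 1 ∨ d i = -1) (lam : ℝ) (hlam : 0 ≤ lam)
    {w v : ℝ} (hwv : w ≤ v) :
    (∫ x, d (selIdx hn (shift u (fun i => lam * d i) v) x) ∂(Measure.pi fun _ : Fin n => nu f))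
      - (∫ x, d (selIdx hn (shift u (fun i => lam * d i) w) x)
          ∂(Measure.pi fun _ : Fin n => nu f))
      ≤ 2 * F * n * (n - 1) * lam * (v - w) := by
  classical
  set μ : Measure (Fin n → ℝ) := Measure.pi (fun _ : Fin n => nu f) with hμdef
  set h : Fin n → ℝ := fun i => lam * d i with hhdef
  set B : Fin n → Fin n → Set (Fin n → ℝ) := fun i j =>
    {x | x i - x j ∈ Set.Icc (u j - u i - 2 * v * lam) (u j - u i - 2 * w * lam)} with hBdef
  have hBmeas : ∀ i j, MeasurableSet (B i j) := fun i j =>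
    ((measurable_pi_apply i).sub (measurable_pi_apply j)) measurableSet_Icc
  have hBbound : ∀ i j : Fin n, i ≠ j → (μ (B i j)).toReal ≤ F * (2 * lam * (v - w)) := by
    intro i j hij
    have hb := pair_prob_bound f F hF hmode hone hij
      (u j - u i - 2 * v * lam) (u j - u i - 2 * w * lam)
    have heq : F * ((u j - u i - 2 * w * lam) - (u j - u i - 2 * v * lam))
        = F * (2 * lam * (v - w)) := by ring
    rw [heq] at hb
    have hvw : (0:ℝ) ≤ v - w := sub_nonneg.2 hwv
    exact ENNReal.toReal_le_of_le_ofReal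
      (mul_nonneg hF (mul_nonneg (mul_nonneg (by norm_num) hlam) hvw)) hb
  set C : ℝ := 4 * F * lam * (v - w) with hCdef
  have hCnn : (0 : ℝ) ≤ C := by
    have hvw : (0:ℝ) ≤ v - w := sub_nonneg.2 hwv
    rw [hCdef]
    exact mul_nonneg (mul_nonneg (mul_nonneg (by norm_num) hF) hlam) hvw
  set g : Fin n → Fin n → (Fin n → ℝ) → ℝ := fun i j x =>
    if d j < d i then (B i j).indicator (fun _ => (2 : ℝ)) x else 0 with hgdef
  have hgnn : ∀ i j x, 0 ≤ g i j x := by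
    intro i j x
    simp only [hgdef]
    split
    · exact Set.indicator_nonneg (fun _ _ => by norm_num) x
    · exact le_rfl
  have hgint : ∀ i j, Integrable (g i j) μ := by
    intro i j
    simp only [hgdef]
    split
    · exact (integrable_const (2 : ℝ)).indicator (hBmeas i j)
    · exact integrable_zero _ _ _
  have hDv := integrable_comp_selIdx hn μ (shift u h v) d
  have hDw := integrable_comp_selIdx hn μ (shift u h w) d
  -- pointwise bound
  have hpt : ∀ x, d (selIdx hn (shift u h v) x) - d (selIdx hn (shift u h w) x)
      ≤ ∑ i, ∑ j, g i j x := by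
    intro x
    set i0 := selIdx hn (shift u h v) x with hi0
    set j0 := selIdx hn (shift u h w) x with hj0
    rcases le_or_gt (d i0) (d j0) with hle | hlt
    · refine le_trans (by linarith) (Finset.sum_nonneg fun i _ =>
        Finset.sum_nonneg fun j _ => hgnn i j x)
    · have hdi : d i0 = 1 := by rcases hd i0 with h1 | h1 <;> rcases hd j0 with h2 | h2 <;>
        first | rfl | linarith
      have hdj : d j0 = -1 := by rcases hd i0 with h1 | h1 <;> rcases hd j0 with h2 | h2 <;>
        first | rfl | linarith
      have hxB : x ∈ B i0 j0 := by
        have hv1 := selIdx_le hn (shift u h v) x j0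
        have hw1 := selIdx_le hn (shift u h w) x i0
        rw [← hi0] at hv1
        rw [← hj0] at hw1
        simp only [shift, hhdef] at hv1 hw1
        rw [hdi, hdj] at hv1 hw1
        simp only [hBdef, Set.mem_setOf_eq, Set.mem_Icc]
        constructor <;> linarith
      have hg0 : g i0 j0 x = 2 := by
        simp only [hgdef, if_pos hlt, Set.indicator_of_mem hxB]
      have h1 : g i0 j0 x ≤ ∑ j, g i0 j x :=
        Finset.single_le_sum (f := fun j => g i0 j x) (fun j _ => hgnn i0 j x)
          (Finset.mem_univ j0)
      have h2 : ∑ j, g i0 j x ≤ ∑ i, ∑ j, g i j x :=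
        Finset.single_le_sum (f := fun i => ∑ j, g i j x)
          (fun i _ => Finset.sum_nonneg fun j _ => hgnn i j x) (Finset.mem_univ i0)
      rw [hdi, hdj]
      linarith
  -- integrate the pointwise bound
  have hsumint : Integrable (fun x => ∑ i, ∑ j, g i j x) μ :=
    integrable_finset_sum _ fun i _ => integrable_finset_sum _ fun j _ => hgint i j
  have hmono : (∫ x, (d (selIdx hn (shift u h v) x) - d (selIdx hn (shift u h w) x)) ∂μ)
      ≤ ∫ x, (∑ i, ∑ j, g i j x) ∂μ :=
    integral_mono (hDv.sub hDw) hsumint hpt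
  rw [integral_sub hDv hDw] at hmono
  have hsum_eq : (∫ x, (∑ i, ∑ j, g i j x) ∂μ) = ∑ i, ∑ j, ∫ x, g i j x ∂μ := by
    rw [integral_finset_sum _ fun i _ => integrable_finset_sum _ fun j _ => hgint i j]
    exact Finset.sum_congr rfl fun i _ => integral_finset_sum _ fun j _ => hgint i j
  have hgval : ∀ i j, (∫ x, g i j x ∂μ) ≤ if d j < d i then C else 0 := by
    intro i j
    simp only [hgdef]
    by_cases hc : d j < d i
    · rw [if_pos hc]
      have hne : i ≠ j := by rintro rfl; exact lt_irrefl _ hc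
      have : (∫ x, (B i j).indicator (fun _ => (2:ℝ)) x ∂μ) = (μ (B i j)).toReal • (2:ℝ) :=
        integral_indicator_const (2 : ℝ) (hBmeas i j)
      simp only [if_pos hc]
      rw [this, smul_eq_mul]
      have := hBbound i j hne
      rw [hCdef]
      nlinarith [ENNReal.toReal_nonneg (a := μ (B i j))]
    · simp only [if_neg hc, integral_zero]
      exact le_rfl
  have hT : (∑ i, ∑ j, if d j < d i then C else 0) ≤ (n : ℝ) * ((n : ℝ) * C - C) / 2 := by
    have hswap : (∑ i, ∑ j, if d j < d i then C else 0)
        = (∑ i, ∑ j, if d i < d j then C else 0) := by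
      rw [Finset.sum_comm]
    have h2T : (∑ i, ∑ j, if d j < d i then C else 0)
          + (∑ i, ∑ j, if d i < d j then C else 0)
        ≤ ∑ i : Fin n, ∑ j : Fin n, (if i = j then (0:ℝ) else C) := by
      rw [← Finset.sum_add_distrib]
      refine Finset.sum_le_sum fun i _ => ?_
      rw [← Finset.sum_add_distrib]
      refine Finset.sum_le_sum fun j _ => ?_
      by_cases hij : i = j
      · subst hij; simp
      · rw [if_neg hij]
        by_cases hc : d j < d i
        · rw [if_pos hc, if_neg (asymm hc), add_zero]
        · rw [if_neg hc, zero_add]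
          by_cases hc2 : d i < d j
          · rw [if_pos hc2]
          · rw [if_neg hc2]; exact hCnn
    have hinner : ∀ i : Fin n, (∑ j, if i = j then (0:ℝ) else C) = (n : ℝ) * C - C := by
      intro i
      have h1 : ∀ j : Fin n, (if i = j then (0:ℝ) else C) = C - (if i = j then C else 0) := by
        intro j; by_cases hij : i = j <;> simp [hij]
      rw [Finset.sum_congr rfl fun j _ => h1 j, Finset.sum_sub_distrib, Finset.sum_const,
        Finset.card_univ, Fintype.card_fin, Finset.sum_ite_eq, if_pos (Finset.mem_univ i),
        nsmul_eq_mul]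
    have houter : (∑ i : Fin n, ∑ j : Fin n, (if i = j then (0:ℝ) else C))
        = (n : ℝ) * ((n : ℝ) * C - C) := by
      rw [Finset.sum_congr rfl fun i _ => hinner i, Finset.sum_const, Finset.card_univ,
        Fintype.card_fin, nsmul_eq_mul]
    rw [houter] at h2T
    rw [hswap] at h2T ⊢
    linarith
  have hfinal : (∑ i, ∑ j, ∫ x, g i j x ∂μ) ≤ (n : ℝ) * ((n : ℝ) * C - C) / 2 := by
    refine le_trans (Finset.sum_le_sum fun i _ => Finset.sum_le_sum fun j _ => hgval i j) hT
  have hend : (n : ℝ) * ((n : ℝ) * C - C) / 2 = 2 * F * n * (n - 1) * lam * (v - w) := by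
    rw [hCdef]; ring
  rw [hsum_eq] at hmono
  linarith

lemma estar_le {n : ℕ} (hn : 0 < n) (μ : Measure (Fin n → ℝ)) [IsProbabilityMeasure μ]
    (hint : ∀ i : Fin n, Integrable (fun x : Fin n → ℝ => x i) μ)
    (E : (Fin n → ℝ) → ℝ) (hE : ∀ u : Fin n → ℝ, E u = ∫ x, (⨆ i : Fin n, (u i + x i)) ∂μ)
    (p : Fin n → ℝ) (hp1 : ∑ i, p i = 1) (hp0 : ∀ i, 0 ≤ p i) (u : Fin n → ℝ) :
    ∑ i, p i * u i - E u ≤ - ∫ x, (∑ i, p i * x i) ∂μ := by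
  haveI : Nonempty (Fin n) := ⟨⟨0, hn⟩⟩
  have hpt : ∀ x : Fin n → ℝ, (∑ i, p i * u i) + (∑ i, p i * x i)
      ≤ ⨆ i, (u i + x i) := by
    intro x
    have hsup : ∀ i : Fin n, u i + x i ≤ ⨆ i, (u i + x i) := fun i =>
      le_ciSup (f := fun i => u i + x i) (Set.Finite.bddAbove (Set.finite_range _)) i
    have h1 : ∑ i, p i * (u i + x i) ≤ ∑ i, p i * (⨆ i, (u i + x i)) :=
      Finset.sum_le_sum fun i _ => mul_le_mul_of_nonneg_left (hsup i) (hp0 i)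
    have h2 : ∑ i, p i * (⨆ i, (u i + x i)) = ⨆ i, (u i + x i) := by
      rw [← Finset.sum_mul, hp1, one_mul]
    have h3 : ∑ i, p i * (u i + x i) = (∑ i, p i * u i) + (∑ i, p i * x i) := by
      rw [← Finset.sum_add_distrib]
      exact Finset.sum_congr rfl fun i _ => by ring
    linarith
  have hix : Integrable (fun x : Fin n → ℝ => ∑ i, p i * x i) μ :=
    integrable_finset_sum _ fun i _ => (hint i).const_mul (p i)
  have hil : Integrable (fun x : Fin n → ℝ => (∑ i, p i * u i) + (∑ i, p i * x i)) μ :=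
    (integrable_const _).add hix
  have hisup : Integrable (fun x : Fin n → ℝ => ⨆ i, (u i + x i)) μ :=
    integrable_isup hn μ hint u
  have hmono := integral_mono hil hisup hpt
  rw [integral_add (integrable_const _) hix, integral_const] at hmono
  simp only [measure_univ, probReal_univ, ENNReal.toReal_one, one_smul, smul_eq_mul] at hmono
  rw [hE u]
  linarith

end SCIID

open SCIID in
set_option maxHeartbeats 1000000 in
/-- Strong convexity of `E*` for IID utility shocks: if the coordinates of
`ε` are i.i.d. with common density `f` having a mode `z̄`, then `E*` is `β`-strongly
convex on `Δ` w.r.t. the `ℓ1`-norm with `β = 1/(2 n (n−1) f(z̄))`. -/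
theorem conjugate_strongly_convex_iid
    (n : ℕ) (hn : 2 ≤ n)
    (μ : Measure (Fin n → ℝ)) [IsProbabilityMeasure μ]
    (hint : ∀ i : Fin n, Integrable (fun x : Fin n → ℝ => x i) μ)
    (f : ℝ → ℝ) (hf0 : ∀ z, 0 ≤ f z)
    (hiid : μ = Measure.pi (fun _ : Fin n =>
      (volume : Measure ℝ).withDensity (fun z => ENNReal.ofReal (f z))))
    (zbar : ℝ) (hmode : ∀ z, f z ≤ f zbar)
    (E : (Fin n → ℝ) → ℝ)
    (hE : ∀ u : Fin n → ℝ, E u = ∫ x, (⨆ i : Fin n, (u i + x i)) ∂μ)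
    (Estar : (Fin n → ℝ) → ℝ)
    (hEstar : ∀ p : Fin n → ℝ,
      Estar p = sSup {y : ℝ | ∃ u : Fin n → ℝ, y = ∑ i, p i * u i - E u}) :
    ∀ p ∈ {p : Fin n → ℝ | ∑ i, p i = 1 ∧ ∀ i, 0 ≤ p i},
    ∀ q ∈ {p : Fin n → ℝ | ∑ i, p i = 1 ∧ ∀ i, 0 ≤ p i},
    ∀ α ∈ Set.Icc (0 : ℝ) 1,
      Estar (α • p + (1 - α) • q)
        ≤ α * Estar p + (1 - α) * Estar q
          - (1 / (2 * n * (n - 1) * f zbar)) / 2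
            * α * (1 - α) * (∑ i, |p i - q i|) ^ 2 := by
  classical
  intro p hp q hq α hα
  obtain ⟨hp1, hp0⟩ := hp
  obtain ⟨hq1, hq0⟩ := hq
  obtain ⟨hα0, hα1⟩ := hα
  have hn0 : 0 < n := by omega
  haveI : Nonempty (Fin n) := ⟨⟨0, hn0⟩⟩
  -- the mode value is positive
  have hF0 : 0 ≤ f zbar := hf0 zbar
  have hFpos : 0 < f zbar := by
    rcases hF0.lt_or_eq with hlt | heq
    · exact hlt
    · exfalso
      have hzero : (fun z => ENNReal.ofReal (f z)) = (fun _ : ℝ => (0 : ENNReal)) := by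
        funext z
        rw [ENNReal.ofReal_eq_zero]
        have := hmode z; linarith
      have h1 : μ Set.univ = 1 := measure_univ
      rw [hiid, hzero] at h1
      have h2 : ((volume : Measure ℝ).withDensity fun _ : ℝ => (0 : ENNReal)) = 0 := by
        simpa using MeasureTheory.withDensity_zero (μ := (volume : Measure ℝ))
      rw [h2] at h1
      have h3 : Measure.pi (fun _ : Fin n => (0 : Measure ℝ)) Set.univ = 0 := by
        rw [Measure.pi_univ]
        simp [zero_pow (by omega : n ≠ 0)]
      rw [h3] at h1
      exact zero_ne_one h1
  obtain ⟨S, hSdef⟩ : ∃ S : ℝ, S = ∑ i, |p i - q i| := ⟨_, rfl⟩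
  rw [← hSdef]
  have hS0 : 0 ≤ S := hSdef ▸ Finset.sum_nonneg fun i _ => abs_nonneg _
  -- trivial case p = q
  rcases hS0.lt_or_eq with hSpos | hSzero
  swap
  · -- S = 0, so p = q
    have hpq : p = q := by
      funext i
      have h1 : ∀ j ∈ Finset.univ, (0:ℝ) ≤ |p j - q j| := fun j _ => abs_nonneg _
      have h2 := (Finset.sum_eq_zero_iff_of_nonneg h1).1 (hSdef ▸ hSzero.symm) i (Finset.mem_univ i)
      have := abs_eq_zero.1 h2
      linarith
    rw [hpq]
    have hcv : α • q + (1 - α) • q = q := by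
      funext i
      simp only [Pi.add_apply, Pi.smul_apply, smul_eq_mul]
      ring
    rw [hcv, ← hSzero]
    ring_nf
    nlinarith [hEstar q]
  -- trivial cases α = 0 and α = 1
  by_cases hαz : α = 0
  · subst hαz
    have hcv : (0:ℝ) • p + ((1:ℝ) - 0) • q = q := by
      funext i
      simp only [Pi.add_apply, Pi.smul_apply, smul_eq_mul]
      ring
    rw [hcv]
    ring_nf
    nlinarith [hEstar q]
  by_cases hαo : α = 1
  · subst hαo
    have hcv : (1:ℝ) • p + ((1:ℝ) - 1) • q = p := by
      funext i
      simp only [Pi.add_apply, Pi.smul_apply, smul_eq_mul]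
      ring
    rw [hcv]
    ring_nf
    nlinarith [hEstar p]
  have hαpos : 0 < α := lt_of_le_of_ne hα0 (Ne.symm hαz)
  have hα1' : α < 1 := lt_of_le_of_ne hα1 hαo
  -- main setup
  have hn2 : (2:ℝ) ≤ (n:ℝ) := by exact_mod_cast hn
  obtain ⟨K, hKdef⟩ : ∃ K : ℝ, K = 2 * f zbar * (n:ℝ) * ((n:ℝ) - 1) := ⟨_, rfl⟩
  have hKpos : 0 < K := by
    rw [hKdef]
    have : (0:ℝ) < (n:ℝ) - 1 := by linarith
    have : (0:ℝ) < (n:ℝ) := by linarith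
    positivity
  obtain ⟨lam, hlamdef⟩ : ∃ lam : ℝ, lam = S / K := ⟨_, rfl⟩
  have hlam : 0 < lam := hlamdef ▸ div_pos hSpos hKpos
  obtain ⟨d, hddef⟩ : ∃ d : Fin n → ℝ, d = fun i => if q i ≤ p i then 1 else -1 := ⟨_, rfl⟩
  have hd : ∀ i, d i = 1 ∨ d i = -1 := by
    intro i
    by_cases h : q i ≤ p i
    · left; rw [hddef]; simp [h]
    · right; rw [hddef]; simp [h]
  have hdS : ∑ i, (p i - q i) * d i = S := by
    rw [hSdef]

    refine Finset.sum_congr rfl fun i _ => ?_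
    by_cases h : q i ≤ p i
    · rw [hddef]
      simp only [if_pos h]
      rw [mul_one, abs_of_nonneg (by linarith : (0:ℝ) ≤ p i - q i)]
    · rw [hddef]
      simp only [if_neg h]
      push_neg at h
      rw [abs_of_neg (by linarith : p i - q i < 0)]
      ring
  obtain ⟨hvec, hhv⟩ : ∃ h : Fin n → ℝ, h = fun i => lam * d i := ⟨_, rfl⟩
  obtain ⟨M, hMdef⟩ : ∃ M : ℝ, M = K * lam ^ 2 := ⟨_, rfl⟩
  have hM0 : 0 ≤ M := by rw [hMdef]; exact mul_nonneg hKpos.le (sq_nonneg _)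
  -- measure instances
  haveI hsf : SigmaFinite (nu f) := sigmaFinite_nu f (f zbar) hF0 hmode
  have hpi : Measure.pi (fun _ : Fin n => nu f) = μ := by rw [hiid]; rfl
  haveI hprob2 : IsProbabilityMeasure (Measure.pi (fun _ : Fin n => nu f)) := by
    rw [hpi]; infer_instance
  have hone : nu f Set.univ = 1 := nu_univ_eq_one hn0 f (f zbar) hF0 hmode hprob2
  -- the simplex facts for the convex combination
  obtain ⟨pa, hpadef⟩ : ∃ pa : Fin n → ℝ, pa = α • p + (1 - α) • q := ⟨_, rfl⟩
  rw [show (α • p + (1 - α) • q) = pa from hpadef.symm]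
  have hpa_apply : ∀ i, pa i = α * p i + (1 - α) * q i := by
    intro i; rw [hpadef]; simp only [Pi.add_apply, Pi.smul_apply, smul_eq_mul]
  have hpa1 : ∑ i, pa i = 1 := by
    rw [Finset.sum_congr rfl fun i _ => hpa_apply i, Finset.sum_add_distrib,
      ← Finset.mul_sum, ← Finset.mul_sum, hp1, hq1]
    ring
  have hpa0 : ∀ i, 0 ≤ pa i := by
    intro i
    rw [hpa_apply i]
    have := hp0 i
    have := hq0 i
    nlinarith
  have hbdd : ∀ r : Fin n → ℝ, (∑ i, r i = 1) → (∀ i, 0 ≤ r i) →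
      BddAbove {y : ℝ | ∃ u : Fin n → ℝ, y = ∑ i, r i * u i - E u} := by
    intro r h1 h0
    exact ⟨-∫ x, (∑ i, r i * x i) ∂μ, by
      rintro y ⟨u, rfl⟩
      exact estar_le hn0 μ hint E hE r h1 h0 u⟩
  -- the key estimate with error terms
  have main : ∀ ε : ℝ, 0 < ε → ∀ N : ℕ, 0 < N →
      Estar pa ≤ α * Estar p + (1 - α) * Estar q
        - α * (1 - α) * (lam * S - M / 2) + ε + α * (1 - α) * (M / (2 * N)) := by
    intro ε hε N hN
    have hNR : (0:ℝ) < N := by exact_mod_cast hN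
    have hne : {y : ℝ | ∃ u : Fin n → ℝ, y = ∑ i, pa i * u i - E u}.Nonempty := ⟨_, 0, rfl⟩
    have hlt : Estar pa - ε < sSup {y : ℝ | ∃ u : Fin n → ℝ, y = ∑ i, pa i * u i - E u} := by
      rw [← hEstar pa]; linarith
    obtain ⟨y, hymem, hy⟩ := exists_lt_of_lt_csSup hne hlt
    obtain ⟨u, rfl⟩ := hymem
    obtain ⟨φ, hφdef⟩ : ∃ φ : ℝ → ℝ,
        ∀ t, φ t = ∫ x, (⨆ i, (shift u hvec t i + x i)) ∂μ := ⟨_, fun _ => rfl⟩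
    obtain ⟨Ψ, hΨdef⟩ : ∃ Ψ : ℝ → ℝ,
        ∀ t, Ψ t = ∫ x, hvec (selIdx hn0 (shift u hvec t) x) ∂μ := ⟨_, fun _ => rfl⟩
    have hstepu : ∀ w v : ℝ, w ≤ v → φ v - φ w ≤ (v - w) * Ψ v := by
      intro w v hwv
      rw [hφdef, hφdef, hΨdef]
      exact step_upper hn0 μ hint u hvec hwv
    have hstepl : ∀ w v : ℝ, w ≤ v → (v - w) * Ψ w ≤ φ v - φ w := by
      intro w v hwv
      rw [hφdef, hφdef, hΨdef]
      exact step_lower hn0 μ hint u hvec hwv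
    have hlip : ∀ w v : ℝ, w ≤ v → Ψ v - Ψ w ≤ M * (v - w) := by
      intro w v hwv
      have hl := psi_lip hn0 f (f zbar) hF0 hmode hone u d hd lam hlam.le hwv
      rw [hpi, ← hhv] at hl
      have hΨeq : ∀ t : ℝ, Ψ t = lam * ∫ x, d (selIdx hn0 (shift u hvec t) x) ∂μ := by
        intro t
        rw [hΨdef, ← integral_const_mul]
        refine integral_congr_ae (Filter.Eventually.of_forall fun x => ?_)
        rw [hhv]
      rw [hΨeq v, hΨeq w, ← mul_sub]
      have h2 := mul_le_mul_of_nonneg_left hl hlam.le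
      refine h2.trans (le_of_eq ?_)
      rw [hMdef, hKdef]
      ring
    have up := chord_up φ Ψ M hM0 hstepu hlip (1 - α) (by linarith) N hN
    have down := chord_down φ Ψ M hM0 hstepl hlip α hα0 N hN
    have hEφ : ∀ t : ℝ, E (shift u hvec t) = φ t := by
      intro t
      rw [hE (shift u hvec t), hφdef]
    have hy1 : ∑ i, p i * (shift u hvec (1 - α) i) - E (shift u hvec (1 - α)) ≤ Estar p := by
      rw [hEstar p]
      exact le_csSup (hbdd p hp1 hp0) ⟨_, rfl⟩
    have hy2 : ∑ i, q i * (shift u hvec (-α) i) - E (shift u hvec (-α)) ≤ Estar q := by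
      rw [hEstar q]
      exact le_csSup (hbdd q hq1 hq0) ⟨_, rfl⟩
    have hexp1 : ∑ i, p i * (shift u hvec (1 - α) i)
        = ∑ i, p i * u i + (1 - α) * ∑ i, p i * hvec i := by
      have h1 : ∀ i, p i * (shift u hvec (1 - α) i)
          = p i * u i + (1 - α) * (p i * hvec i) := by
        intro i; simp only [shift]; ring
      rw [Finset.sum_congr rfl fun i _ => h1 i, Finset.sum_add_distrib, Finset.mul_sum]
    have hexp2 : ∑ i, q i * (shift u hvec (-α) i)
        = ∑ i, q i * u i - α * ∑ i, q i * hvec i := by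
      have h1 : ∀ i, q i * (shift u hvec (-α) i)
          = q i * u i - α * (q i * hvec i) := by
        intro i; simp only [shift]; ring
      rw [Finset.sum_congr rfl fun i _ => h1 i, Finset.sum_sub_distrib, Finset.mul_sum]
    have hpau : ∑ i, pa i * u i = α * ∑ i, p i * u i + (1 - α) * ∑ i, q i * u i := by
      have h1 : ∀ i, pa i * u i = α * (p i * u i) + (1 - α) * (q i * u i) := by
        intro i; rw [hpa_apply i]; ring
      rw [Finset.sum_congr rfl fun i _ => h1 i, Finset.sum_add_distrib, Finset.mul_sum,
        Finset.mul_sum]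
    have hhsum : (∑ i, p i * hvec i) - (∑ i, q i * hvec i) = lam * S := by
      rw [← Finset.sum_sub_distrib]
      have h1 : ∀ i, p i * hvec i - q i * hvec i = lam * ((p i - q i) * d i) := by
        intro i; rw [hhv]; ring
      rw [Finset.sum_congr rfl fun i _ => h1 i, ← Finset.mul_sum, hdS]
    have hEu : E u = φ 0 := by
      have h0 : shift u hvec 0 = u := by funext i; simp [shift]
      rw [← hEφ 0, h0]
    have hcomb : α * φ (1 - α) + (1 - α) * φ (-α) - φ 0
        ≤ M * (α * (1 - α)) * (N + 1) / (2 * N) := by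
      have u1 := mul_le_mul_of_nonneg_left up hα0
      have d1 := mul_le_mul_of_nonneg_left down (by linarith : (0:ℝ) ≤ 1 - α)
      ring_nf at u1 d1 ⊢
      linarith [u1, d1]
    have hcN : M * (α * (1 - α)) * (N + 1) / (2 * N)
        = α * (1 - α) * (M / 2) + α * (1 - α) * (M / (2 * N)) := by
      have hNne : (N:ℝ) ≠ 0 := ne_of_gt hNR
      field_simp
    rw [hcN] at hcomb
    rw [hexp1, hEφ (1 - α)] at hy1
    rw [hexp2, hEφ (-α)] at hy2
    rw [hpau, hEu] at hy
    have a1 := mul_le_mul_of_nonneg_left hy1 hα0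
    have a2 := mul_le_mul_of_nonneg_left hy2 (by linarith : (0:ℝ) ≤ 1 - α)
    have hhs2 : α * (1 - α) * ((∑ i, p i * hvec i) - (∑ i, q i * hvec i))
        = α * (1 - α) * (lam * S) := by rw [hhsum]
    ring_nf at a1 a2 hy hcomb hhs2 ⊢
    linarith [a1, a2, hy, hcomb, hhs2]
  -- pass to the limit
  have hgoal_eq : (1 / (2 * (n:ℝ) * ((n:ℝ) - 1) * f zbar)) / 2 * α * (1 - α) * S ^ 2
      = α * (1 - α) * (lam * S - M / 2) := by
    have hlsm : lam * S - M / 2 = S ^ 2 / (2 * K) := by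
      rw [hMdef, hlamdef]
      field_simp
      ring
    rw [hlsm, hKdef]
    have h1 : (n:ℝ) ≠ 0 := by positivity
    have h2 : (n:ℝ) - 1 ≠ 0 := by
      have : (1:ℝ) < (n:ℝ) := by linarith
      linarith
    have h3 : f zbar ≠ 0 := ne_of_gt hFpos
    field_simp
    try tauto
  rw [hgoal_eq]
  by_contra hcon
  push_neg at hcon
  obtain ⟨δ, hδdef⟩ : ∃ δ : ℝ, δ = Estar pa
      - (α * Estar p + (1 - α) * Estar q - α * (1 - α) * (lam * S - M / 2)) := ⟨_, rfl⟩
  have hδ : 0 < δ := by rw [hδdef]; linarith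
  obtain ⟨N, hNgt⟩ := exists_nat_gt (max 1 (α * (1 - α) * M / δ * 2))
  have hN1 : (1:ℝ) < N := lt_of_le_of_lt (le_max_left _ _) hNgt
  have hN0 : 0 < N := by exact_mod_cast lt_trans zero_lt_one hN1
  have hNR : (0:ℝ) < N := lt_trans zero_lt_one hN1
  have hNgt2 : α * (1 - α) * M / δ * 2 < N := lt_of_le_of_lt (le_max_right _ _) hNgt
  have h2N : (0:ℝ) < 2 * N := by positivity
  have hmul := mul_lt_mul_of_pos_right hNgt2 hδ
  have hfe : (α * (1 - α) * M / δ * 2) * δ = 2 * (α * (1 - α) * M) := by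
    field_simp
  rw [hfe] at hmul
  have hlast : α * (1 - α) * (M / (2 * N)) < δ / 2 := by
    rw [show α * (1 - α) * (M / (2 * N)) = α * (1 - α) * M / (2 * N) from by ring,
      div_lt_iff₀ h2N]
    nlinarith [hmul]
  have hmain := main (δ / 2) (by linarith) N hN0
  linarith [hmain, hlast, hδdef.le, hδdef.ge]
end

section
/- Key second-order estimate for the generalized nested logit generating function: with G as in the context, for all x ∈ ℝⁿ with x > 0 it holds that ∑_{i=1}^{n} (∂²G(x)/∂x⁽ⁱ⁾²)·x⁽ⁱ⁾² ≤ (1/μ)·(1/(min_{ℓ∈L} μ_ℓ) − 1)·G(x). -/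
/-!
On the open positive orthant each nest contributes `(∑ⱼ wⱼ yⱼ ^ a) ^ b` to `G`, with
`wⱼ = σⱼ ^ a`, `a = 1/μ_ℓ` and `b = μ_ℓ/μ ∈ (0, 1]`, so `a * b = 1/μ`. A diagonal second derivative
is the second derivative along a coordinate line, and with `Tᵢ = wᵢ xᵢ ^ a`, `S = ∑ᵢ Tᵢ` the
one-variable chain rule gives
`∂ᵢ²F · xᵢ² = b (b - 1) a² S ^ (b - 2) Tᵢ² + a b (a - 1) S ^ (b - 1) Tᵢ`.
The first term is nonpositive because `b ≤ 1`; the second sums to `(1/μ) (1/μ_ℓ - 1) F`.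
-/

open Function Finset

theorem iteratedDeriv_two_rpow (p x : ℝ) :
    iteratedDeriv 2 (fun s : ℝ => s ^ p) x = p * (p - 1) * x ^ (p - 2) := by
  rw [iteratedDeriv_eq_iterate, Real.iter_deriv_rpow_const]
  simp [descPochhammer_succ_right]

theorem iteratedDeriv_two_rpow_add_mul_rpow {a b w K y : ℝ} (hy : 0 < y)
    (hS : K + w * y ^ a ≠ 0) :
    iteratedDeriv 2 (fun s => (K + w * s ^ a) ^ b) y * y ^ 2 =
      b * (b - 1) * (K + w * y ^ a) ^ (b - 2) * (a * (w * y ^ a)) ^ 2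
        + b * (K + w * y ^ a) ^ (b - 1) * (a * (a - 1) * (w * y ^ a)) := by
  have hinner : ContDiffAt ℝ 2 (fun s => K + w * s ^ a) y :=
    contDiffAt_const.add (contDiffAt_const.mul (Real.contDiffAt_rpow_const_of_ne hy.ne'))
  have hderiv : deriv (fun s => K + w * s ^ a) y = w * (a * y ^ (a - 1)) := by
    simp [Real.deriv_rpow_const]
  have hderiv2 : iteratedDeriv 2 (fun s => K + w * s ^ a) y =
      w * (a * (a - 1) * y ^ (a - 2)) := by
    rw [iteratedDeriv_const_add two_pos, iteratedDeriv_const_mul_field, iteratedDeriv_two_rpow]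
  have hcomp := iteratedDeriv_comp_two (g := fun S : ℝ => S ^ b)
    (f := fun s => K + w * s ^ a) (Real.contDiffAt_rpow_const_of_ne hS) hinner
  rw [comp_def] at hcomp
  rw [hcomp, hderiv, hderiv2, iteratedDeriv_two_rpow,
    Real.deriv_rpow_const, Real.rpow_sub hy, Real.rpow_sub hy, Real.rpow_one, Real.rpow_two]
  field_simp

theorem iteratedFDeriv_two_single_single {𝕜 ι F : Type*} [NontriviallyNormedField 𝕜] [Fintype ι]
    [DecidableEq ι] [NormedAddCommGroup F] [NormedSpace 𝕜 F] {f : (ι → 𝕜) → F} {x : ι → 𝕜}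
    (hf : ContDiffAt 𝕜 2 f x) (i : ι) :
    iteratedFDeriv 𝕜 2 f x ![Pi.single i 1, Pi.single i 1] =
      iteratedDeriv 2 (fun s => f (update x i s)) (x i) := by
  have hderiv : deriv (update x i) = fun _ => Pi.single i 1 := funext (deriv_update x i)
  have hderiv2 : iteratedDeriv 2 (update x i) (x i) = 0 := by
    simp [iteratedDeriv_succ, hderiv]
  have := iteratedDeriv_vcomp_two (g := f) (f := update x i) (x := x i) (by simpa using hf)
    (contDiff_update 2 x i).contDiffAt
  rw [comp_def] at this
  rw [this, hderiv2, hderiv, map_zero, add_zero, update_eq_self]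
  congr 1
  funext j
  fin_cases j <;> rfl

noncomputable def nestTerm {ι : Type*} [Fintype ι] (w : ι → ℝ) (a b : ℝ) (y : ι → ℝ) : ℝ :=
  (∑ j, w j * y j ^ a) ^ b

section nestTerm

variable {ι : Type*} [Fintype ι] (w : ι → ℝ) (a b : ℝ) {x : ι → ℝ}

theorem nestTerm_update [DecidableEq ι] (x : ι → ℝ) (i : ι) (s : ℝ) :
    nestTerm w a b (update x i s) = (∑ j ∈ univ.erase i, w j * x j ^ a + w i * s ^ a) ^ b := by
  rw [nestTerm, ← sum_erase_add _ _ (mem_univ i), update_self]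
  congr 2
  exact sum_congr rfl fun j hj => by rw [update_of_ne (ne_of_mem_erase hj)]

theorem contDiffAt_nestTerm {n : WithTop ℕ∞} (hx : ∀ j, x j ≠ 0)
    (hS : ∑ j, w j * x j ^ a ≠ 0) : ContDiffAt ℝ n (nestTerm w a b) x :=
  (ContDiffAt.sum fun j _ => contDiffAt_const.mul
    ((contDiffAt_apply (𝕜 := ℝ) (E := ℝ) j x).rpow_const_of_ne (hx j))).rpow_const_of_ne hS


theorem iteratedFDeriv_two_nestTerm_single_mul_sq [DecidableEq ι] (hx : ∀ j, 0 < x j)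
    (hS : ∑ j, w j * x j ^ a ≠ 0) (i : ι) :
    iteratedFDeriv ℝ 2 (nestTerm w a b) x ![Pi.single i 1, Pi.single i 1] * x i ^ 2 =
      b * (b - 1) * (∑ j, w j * x j ^ a) ^ (b - 2) * (a * (w i * x i ^ a)) ^ 2
        + b * (∑ j, w j * x j ^ a) ^ (b - 1) * (a * (a - 1) * (w i * x i ^ a)) := by
  have hsum : ∑ j ∈ univ.erase i, w j * x j ^ a + w i * x i ^ a = ∑ j, w j * x j ^ a :=
    sum_erase_add _ _ (mem_univ i)
  rw [iteratedFDeriv_two_single_single (contDiffAt_nestTerm w a b (fun j => (hx j).ne') hS),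
    funext (nestTerm_update w a b x i), iteratedDeriv_two_rpow_add_mul_rpow (hx i) (hsum ▸ hS),
    hsum]

theorem sum_iteratedFDeriv_two_nestTerm_single_mul_sq_le [DecidableEq ι]
    (hx : ∀ j, 0 < x j) (hS : 0 < ∑ j, w j * x j ^ a) (hb₀ : 0 ≤ b) (hb₁ : b ≤ 1) :
    ∑ i, iteratedFDeriv ℝ 2 (nestTerm w a b) x ![Pi.single i 1, Pi.single i 1] * x i ^ 2
      ≤ a * b * (a - 1) * nestTerm w a b x := by
  rw [sum_congr rfl fun i _ => iteratedFDeriv_two_nestTerm_single_mul_sq w a b hx hS.ne' i,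
    nestTerm]
  set S := ∑ j, w j * x j ^ a
  have hS_pow : S ^ (b - 1) * S = S ^ b := by
    rw [← Real.rpow_add_one hS.ne', sub_add_cancel]
  have hcoef : b * (b - 1) ≤ 0 := mul_nonpos_of_nonneg_of_nonpos hb₀ (by linarith)
  have hrest : 0 ≤ S ^ (b - 2) * a ^ 2 * ∑ i, (w i * x i ^ a) ^ 2 :=
    mul_nonneg (mul_nonneg (Real.rpow_nonneg hS.le _) (sq_nonneg a))
      (sum_nonneg fun i _ => sq_nonneg _)
  calc ∑ i, (b * (b - 1) * S ^ (b - 2) * (a * (w i * x i ^ a)) ^ 2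
        + b * S ^ (b - 1) * (a * (a - 1) * (w i * x i ^ a)))
      = b * (b - 1) * S ^ (b - 2) * a ^ 2 * ∑ i, (w i * x i ^ a) ^ 2
          + a * b * (a - 1) * (S ^ (b - 1) * S) := by
        simp only [S, sum_add_distrib, mul_sum]
        congr 1 <;> exact sum_congr rfl fun i _ => by ring
    _ ≤ a * b * (a - 1) * S ^ b := by
        rw [hS_pow]
        linarith [mul_nonpos_of_nonpos_of_nonneg hcoef hrest]

end nestTerm

theorem sum_filter_pos_mul_rpow {ι : Type*} [Fintype ι] {σ y : ι → ℝ} (hσ : ∀ i, 0 ≤ σ i)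
    (hy : ∀ i, 0 ≤ y i) {a : ℝ} (ha : a ≠ 0) :
    ∑ i ∈ univ.filter (fun i => 0 < σ i), (σ i * y i) ^ a = ∑ i, σ i ^ a * y i ^ a := by
  rw [sum_filter_of_ne fun i _ hi => (hσ i).lt_of_ne' fun h0 => hi (by simp [h0, ha])]
  exact sum_congr rfl fun i _ => Real.mul_rpow (hσ i) (hy i)

theorem GNL_second_order_estimate_general
    (n : ℕ)
    (L : Type) [Fintype L] [Nonempty L]
    (μ : ℝ) (hμ : 0 < μ)
    (μl : L → ℝ) (hμl : ∀ ℓ, 0 < μl ℓ) (hμlμ : ∀ ℓ, μl ℓ ≤ μ)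
    (σ : Fin n → L → ℝ) (hσ0 : ∀ i ℓ, 0 ≤ σ i ℓ)
    (hnest : ∀ ℓ : L, ∃ i, 0 < σ i ℓ)
    (G : (Fin n → ℝ) → ℝ)
    (hG : ∀ x : Fin n → ℝ, (∀ i, 0 < x i) →
      G x = ∑ ℓ, (∑ i ∈ Finset.univ.filter (fun i => 0 < σ i ℓ),
        (σ i ℓ * x i) ^ (1 / μl ℓ)) ^ (μl ℓ / μ)) :
    ∀ x : Fin n → ℝ, (∀ i, 0 < x i) →
      ∑ i, iteratedFDeriv ℝ 2 G x ![Pi.single i 1, Pi.single i 1] * (x i) ^ 2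
        ≤ 1 / μ * (1 / (⨅ ℓ, μl ℓ) - 1) * G x := by
  intro x hx
  set w : L → Fin n → ℝ := fun ℓ j => σ j ℓ ^ (1 / μl ℓ)
  set nest : L → (Fin n → ℝ) → ℝ := fun ℓ => nestTerm (w ℓ) (1 / μl ℓ) (μl ℓ / μ)
  have hG_nest : ∀ y : Fin n → ℝ, (∀ i, 0 < y i) → G y = ∑ ℓ, nest ℓ y := fun y hy => by
    rw [hG y hy]
    exact sum_congr rfl fun ℓ _ => by
      rw [sum_filter_pos_mul_rpow (hσ0 · ℓ) (hy · |>.le) (one_div_pos.2 (hμl ℓ)).ne']; rfl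
  have hS : ∀ ℓ, 0 < ∑ j, w ℓ j * x j ^ (1 / μl ℓ) := fun ℓ => by
    obtain ⟨i, hi⟩ := hnest ℓ
    exact sum_pos' (fun j _ => mul_nonneg (Real.rpow_nonneg (hσ0 j ℓ) _)
      (Real.rpow_nonneg (hx j).le _)) ⟨i, mem_univ i,
      mul_pos (Real.rpow_pos_of_pos hi _) (Real.rpow_pos_of_pos (hx i) _)⟩
  have hsmooth : ∀ ℓ ∈ univ, ContDiffAt ℝ 2 (nest ℓ) x := fun ℓ _ =>
    contDiffAt_nestTerm _ _ _ (fun j => (hx j).ne') (hS ℓ).ne'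
  have hG_deriv2 : iteratedFDeriv ℝ 2 G x = ∑ ℓ, iteratedFDeriv ℝ 2 (nest ℓ) x := by
    have hev : G =ᶠ[nhds x] fun y => ∑ ℓ, nest ℓ y :=
      (Filter.eventually_all.2 fun i => (continuous_apply i).continuousAt.eventually
        (lt_mem_nhds (hx i))).mono hG_nest
    rw [(hev.iteratedFDeriv ℝ 2).eq_of_nhds, iteratedFDeriv_fun_sum_apply hsmooth]
  obtain ⟨ℓ₀, hℓ₀⟩ := exists_eq_ciInf_of_finite (f := μl)
  calc ∑ i, iteratedFDeriv ℝ 2 G x ![Pi.single i 1, Pi.single i 1] * (x i) ^ 2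
      = ∑ ℓ, ∑ i, iteratedFDeriv ℝ 2 (nest ℓ) x ![Pi.single i 1, Pi.single i 1] * x i ^ 2 := by
        simp only [hG_deriv2, _root_.sum_apply, sum_mul]
        exact sum_comm
    _ ≤ ∑ ℓ, 1 / μl ℓ * (μl ℓ / μ) * (1 / μl ℓ - 1) * nest ℓ x :=
        sum_le_sum fun ℓ _ => sum_iteratedFDeriv_two_nestTerm_single_mul_sq_le _ _ _ hx (hS ℓ)
          (div_pos (hμl ℓ) hμ).le ((div_le_one hμ).2 (hμlμ ℓ))
    _ ≤ ∑ ℓ, 1 / μ * (1 / (⨅ ℓ, μl ℓ) - 1) * nest ℓ x := by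
        refine sum_le_sum fun ℓ _ => ?_
        rw [show 1 / μl ℓ * (μl ℓ / μ) = 1 / μ by field_simp [(hμl ℓ).ne']]
        have : 0 ≤ nest ℓ x := Real.rpow_nonneg (hS ℓ).le _
        gcongr
        · exact hℓ₀ ▸ hμl ℓ₀
        · exact ciInf_le (Finite.bddBelow_range μl) ℓ
    _ = 1 / μ * (1 / (⨅ ℓ, μl ℓ) - 1) * G x := by rw [← mul_sum, hG_nest x hx]

/-- Key second-order estimate for the generalized nested logit generating
function: `∑_i (∂²G(x)/∂x⁽ⁱ⁾²)·x⁽ⁱ⁾² ≤ (1/μ)·(1/(min_ℓ μ_ℓ) − 1)·G(x)` for `x > 0`. -/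
theorem GNL_second_order_estimate
    (n : ℕ) (hn : 2 ≤ n)
    (L : Type) [Fintype L] [Nonempty L]
    (μ : ℝ) (hμ : 0 < μ)
    (μl : L → ℝ) (hμl : ∀ ℓ, 0 < μl ℓ) (hμlμ : ∀ ℓ, μl ℓ ≤ μ)
    (σ : Fin n → L → ℝ) (hσ0 : ∀ i ℓ, 0 ≤ σ i ℓ)
    (hσ1 : ∀ i, ∑ ℓ, σ i ℓ = 1)
    (hnest : ∀ ℓ : L, ∃ i, 0 < σ i ℓ)
    (G : (Fin n → ℝ) → ℝ)
    (hG : ∀ x : Fin n → ℝ, (∀ i, 0 < x i) →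
      G x = ∑ ℓ, (∑ i ∈ Finset.univ.filter (fun i => 0 < σ i ℓ),
        (σ i ℓ * x i) ^ (1 / μl ℓ)) ^ (μl ℓ / μ)) :
    ∀ x : Fin n → ℝ, (∀ i, 0 < x i) →
      ∑ i, iteratedFDeriv ℝ 2 G x ![Pi.single i 1, Pi.single i 1] * (x i) ^ 2
        ≤ 1 / μ * (1 / (⨅ ℓ, μl ℓ) - 1) * G x :=
  GNL_second_order_estimate_general n L μ hμ μl hμl hμlμ σ hσ0 hnest G hG
end

section
/- Simplicity of the discrete choice prox-function: assume the convex conjugate E* is β-strongly convex on Δ with respect to the ℓ1-norm for some β > 0. Then for every u ∈ ℝⁿ the vector p(u) of choice probabilities, defined by p⁽ⁱ⁾(u) = μ({x ∈ ℝⁿ : u⁽ⁱ⁾ + x⁽ⁱ⁾ ≥ u⁽ʲ⁾ + x⁽ʲ⁾ for all j = 1,…,n}), lies in Δ and is the unique maximizer over Δ of the map p ↦ ⟨p,u⟩ − E*(p); moreover E(u) = ⟨p(u),u⟩ − E*(p(u)). -/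
open MeasureTheory

section Aux
variable {n : ℕ}

lemma prox_sup_attained [NeZero n] (f : Fin n → ℝ) :
    ∃ i, (∀ j, f j ≤ f i) ∧ (⨆ j, f j) = f i := by
  obtain ⟨i, hi⟩ := Finite.exists_max f
  exact ⟨i, hi, le_antisymm (ciSup_le hi) (le_ciSup (Set.Finite.bddAbove (Set.finite_range f)) i)⟩

lemma prox_continuous_sup [NeZero n] (u : Fin n → ℝ) :
    Continuous (fun x : Fin n → ℝ => ⨆ i, (u i + x i)) := by
  have : (fun x : Fin n → ℝ => ⨆ i, (u i + x i))
      = fun x => Finset.univ.sup' Finset.univ_nonempty (fun i => u i + x i) := by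
    funext x; rw [Finset.sup'_univ_eq_ciSup]
  rw [this]
  exact Continuous.finset_sup'_apply Finset.univ_nonempty
    (fun i _ => continuous_const.add (continuous_apply i))

lemma prox_integrable_sup [NeZero n] (μ : Measure (Fin n → ℝ)) [IsProbabilityMeasure μ]
    (hint : ∀ i : Fin n, Integrable (fun x : Fin n → ℝ => x i) μ) (u : Fin n → ℝ) :
    Integrable (fun x : Fin n → ℝ => ⨆ i, (u i + x i)) μ := by
  have hg : Integrable (fun x : Fin n → ℝ => ∑ i, |u i + x i|) μ :=
    integrable_finset_sum _ (fun i _ => ((integrable_const (u i)).add (hint i)).abs)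
  refine hg.mono ((prox_continuous_sup u).aestronglyMeasurable) ?_
  refine Filter.Eventually.of_forall (fun x => ?_)
  obtain ⟨i, hi, hsup⟩ := prox_sup_attained (fun i => u i + x i)
  rw [Real.norm_eq_abs, Real.norm_eq_abs, hsup]
  have h1 : |u i + x i| ≤ ∑ j, |u j + x j| :=
    Finset.single_le_sum (f := fun j => |u j + x j|) (fun j _ => abs_nonneg _) (Finset.mem_univ i)
  exact h1.trans (le_abs_self _)

lemma prox_hyperplane_null (i j : Fin n) (hij : i ≠ j) (c : ℝ) :
    volume {x : Fin n → ℝ | x i - x j = c} = 0 := by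
  set φ : (Fin n → ℝ) →ₗ[ℝ] ℝ := (LinearMap.proj i : (Fin n → ℝ) →ₗ[ℝ] ℝ) - LinearMap.proj j
  have hφ : ∀ x : Fin n → ℝ, φ x = x i - x j := fun x => rfl
  set K := LinearMap.ker φ
  have hK : K ≠ ⊤ := by
    intro h
    have : (Pi.single j 1 : Fin n → ℝ) ∈ K := h ▸ Submodule.mem_top
    have := (LinearMap.mem_ker.mp this)
    rw [hφ] at this
    simp [Pi.single_apply, hij, (by simpa using hij.symm : j ≠ i)] at this
  have hvol : volume (K : Set (Fin n → ℝ)) = 0 := Measure.addHaar_submodule _ K hK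
  set v : Fin n → ℝ := fun k => if k = i then -c else 0 with hv
  have hvi : v i = -c := by simp [hv]
  have hvj : v j = 0 := by simp [hv, hij.symm]
  have hmemK : ∀ y : Fin n → ℝ, y ∈ K ↔ y i - y j = 0 := by
    intro y; rw [LinearMap.mem_ker, hφ]
  have hset : {x : Fin n → ℝ | x i - x j = c} = (fun x => x + v) ⁻¹' K := by
    ext x
    simp only [Set.mem_preimage, SetLike.mem_coe, hmemK, Set.mem_setOf_eq,
      Pi.add_apply, hvi, hvj]
    constructor <;> intro h <;> linarith
  rw [hset, measure_preimage_add_right]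
  exact hvol

end Aux
lemma prox_core
    (n : ℕ) (hn : 2 ≤ n)
    (μ : Measure (Fin n → ℝ)) [IsProbabilityMeasure μ]
    (hint : ∀ i : Fin n, Integrable (fun x : Fin n → ℝ => x i) μ)
    (hac : μ ≪ (volume : Measure (Fin n → ℝ)))
    (E : (Fin n → ℝ) → ℝ)
    (hE : ∀ u : Fin n → ℝ, E u = ∫ x, (⨆ i : Fin n, (u i + x i)) ∂μ)
    (u : Fin n → ℝ)
    (pu : Fin n → ℝ)
    (hpu : ∀ i, pu i
      = (μ {x : Fin n → ℝ | ∀ j, u j + x j ≤ u i + x i}).toReal) :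
    (∑ i, pu i = 1) ∧ (∀ v : Fin n → ℝ, ∑ i, pu i * (v i - u i) ≤ E v - E u) := by
  haveI : NeZero n := ⟨by omega⟩
  set A : Fin n → Set (Fin n → ℝ) := fun i => {x | ∀ j, u j + x j ≤ u i + x i} with hA
  have hAmeas : ∀ i, MeasurableSet (A i) := by
    intro i
    have : A i = ⋂ j, {x : Fin n → ℝ | u j + x j ≤ u i + x i} := by
      ext x; simp [hA, Set.mem_iInter]
    rw [this]
    exact MeasurableSet.iInter fun j =>
      measurableSet_le (measurable_const.add (measurable_pi_apply j))
        (measurable_const.add (measurable_pi_apply i))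
  set T : Set (Fin n → ℝ) := ⋃ i, ⋃ j, {x | i ≠ j ∧ u i + x i = u j + x j} with hT
  have hTpair : ∀ i j : Fin n, MeasurableSet {x : Fin n → ℝ | i ≠ j ∧ u i + x i = u j + x j}
      ∧ μ {x : Fin n → ℝ | i ≠ j ∧ u i + x i = u j + x j} = 0 := by
    intro i j
    by_cases hij : i = j
    · have : {x : Fin n → ℝ | i ≠ j ∧ u i + x i = u j + x j} = ∅ := by
        ext x; simp [hij]
      rw [this]; exact ⟨MeasurableSet.empty, measure_empty⟩
    · have heq : {x : Fin n → ℝ | i ≠ j ∧ u i + x i = u j + x j}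
          = {x : Fin n → ℝ | x i - x j = u j - u i} := by
        ext x; constructor
        · rintro ⟨-, h⟩; simp only [Set.mem_setOf_eq]; linarith
        · intro h; exact ⟨hij, by simp only [Set.mem_setOf_eq] at h; linarith⟩
      rw [heq]
      constructor
      · exact measurableSet_eq_fun ((measurable_pi_apply i).sub (measurable_pi_apply j))
          measurable_const
      · exact hac (prox_hyperplane_null i j hij _)
  have hTmeas : MeasurableSet T :=
    MeasurableSet.iUnion fun i => MeasurableSet.iUnion fun j => (hTpair i j).1
  have hT0 : μ T = 0 :=
    measure_iUnion_null fun i => measure_iUnion_null fun j => (hTpair i j).2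
  have hTmem : ∀ x : Fin n → ℝ, x ∈ T ↔ ∃ i j, i ≠ j ∧ u i + x i = u j + x j := by
    intro x; simp [hT, Set.mem_iUnion]
  set B : Fin n → Set (Fin n → ℝ) := fun i => A i \ T with hB
  have hBmeas : ∀ i, MeasurableSet (B i) := fun i => (hAmeas i).diff hTmeas
  have hμB : ∀ i, μ (B i) = μ (A i) := fun i => measure_diff_null hT0
  have hdisj : Pairwise (Function.onFun Disjoint B) := by
    intro i j hij
    rw [Function.onFun, Set.disjoint_left]
    rintro x ⟨hxi, hxT⟩ ⟨hxj, -⟩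
    exact hxT ((hTmem x).2 ⟨i, j, hij, le_antisymm (hxj i) (hxi j)⟩)
  have hcover : ∀ x : Fin n → ℝ, ∃ i, x ∈ A i := by
    intro x
    obtain ⟨i, hi, -⟩ := prox_sup_attained (fun i => u i + x i)
    exact ⟨i, hi⟩
  have hUnionB : (⋃ i, B i) = Tᶜ := by
    ext x
    simp only [Set.mem_iUnion, Set.mem_compl_iff]
    constructor
    · rintro ⟨i, -, hxT⟩; exact hxT
    · intro hxT; obtain ⟨i, hi⟩ := hcover x; exact ⟨i, hi, hxT⟩
  have hsum1 : ∑ i, pu i = 1 := by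
    have h1 : ∑ i, μ (A i) = 1 := by
      calc ∑ i, μ (A i) = ∑ i, μ (B i) := by simp_rw [hμB]
        _ = μ (⋃ i, B i) := by rw [measure_iUnion hdisj hBmeas, tsum_fintype]
        _ = μ Tᶜ := by rw [hUnionB]
        _ = μ Set.univ - μ T := measure_compl hTmeas (measure_ne_top μ T)
        _ = 1 := by rw [hT0, measure_univ]; simp
    have : ∑ i, pu i = (∑ i, μ (A i)).toReal := by
      rw [ENNReal.toReal_sum (fun i _ => measure_ne_top μ _)]
      exact Finset.sum_congr rfl fun i _ => hpu i
    rw [this, h1, ENNReal.toReal_one]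
  refine ⟨hsum1, ?_⟩
  -- subgradient inequality
  intro v
  have hIntS : ∀ w : Fin n → ℝ, Integrable (fun x : Fin n → ℝ => ⨆ i, (w i + x i)) μ :=
    fun w => prox_integrable_sup μ hint w
  set h : (Fin n → ℝ) → ℝ := fun x => ∑ i, Set.indicator (B i) (fun _ => v i - u i) x with hh
  have hh_int : Integrable h μ :=
    integrable_finset_sum _ fun i _ => (integrable_const _).indicator (hBmeas i)
  have hh_integral : ∫ x, h x ∂μ = ∑ i, pu i * (v i - u i) := by
    rw [hh]
    rw [integral_finset_sum _ (fun i _ => (integrable_const _).indicator (hBmeas i))]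
    refine Finset.sum_congr rfl fun i _ => ?_
    rw [integral_indicator_const _ (hBmeas i), Measure.real, hμB i, smul_eq_mul, hpu i, mul_comm]
  have hptwise : ∀ x ∉ T, h x ≤ (⨆ i, (v i + x i)) - (⨆ i, (u i + x i)) := by
    intro x hxT
    obtain ⟨i, hi, hieq⟩ := prox_sup_attained (fun j => u j + x j)
    have hxBi : x ∈ B i := ⟨hi, hxT⟩
    have hhx : h x = v i - u i := by
      simp only [hh]
      rw [Finset.sum_eq_single i]
      · rw [Set.indicator_of_mem hxBi]
      · intro j _ hji
        refine Set.indicator_of_notMem (fun hxBj => ?_) _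
        exact hxT ((hTmem x).2 ⟨j, i, hji, le_antisymm (hi j) (hxBj.1 i)⟩)
      · intro habs; exact absurd (Finset.mem_univ i) habs
    have h2 : v i + x i ≤ ⨆ j, (v j + x j) :=
      le_ciSup (f := fun j => v j + x j) (Set.Finite.bddAbove (Set.finite_range _)) i
    rw [hhx, hieq]
    linarith
  have hae : ∀ᵐ x ∂μ, h x ≤ (⨆ i, (v i + x i)) - (⨆ i, (u i + x i)) := by
    refine measure_mono_null ?_ hT0
    intro x hx
    simp only [Set.mem_setOf_eq, Set.mem_compl_iff] at hx ⊢
    by_contra hxT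
    exact hx (hptwise x hxT)
  have hmono := integral_mono_ae hh_int ((hIntS v).sub (hIntS u)) hae
  rw [hh_integral] at hmono
  have hgoal : ∑ i, pu i * (v i - u i)
      ≤ (∫ x, (⨆ i : Fin n, (v i + x i)) ∂μ) - ∫ x, (⨆ i : Fin n, (u i + x i)) ∂μ := by
    rw [← integral_sub (hIntS v) (hIntS u)]
    exact hmono
  rw [hE v, hE u]
  exact hgoal

/-- Simplicity of the discrete choice prox-function: if `E*` is `β`-strongly
convex on `Δ` w.r.t. the `ℓ1`-norm, then for every `u` the vector of choice probabilities
`p(u)` lies in `Δ`, is the unique maximizer over `Δ` of `p ↦ ⟨p,u⟩ − E*(p)`, and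
`E(u) = ⟨p(u),u⟩ − E*(p(u))`. -/
theorem simplicity_of_prox
    (n : ℕ) (hn : 2 ≤ n)
    (μ : Measure (Fin n → ℝ)) [IsProbabilityMeasure μ]
    (hint : ∀ i : Fin n, Integrable (fun x : Fin n → ℝ => x i) μ)
    (hac : μ ≪ (volume : Measure (Fin n → ℝ)))
    (hsupp : ∀ U : Set (Fin n → ℝ), IsOpen U → U.Nonempty → 0 < μ U)
    (E : (Fin n → ℝ) → ℝ)
    (hE : ∀ u : Fin n → ℝ, E u = ∫ x, (⨆ i : Fin n, (u i + x i)) ∂μ)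
    (Estar : (Fin n → ℝ) → ℝ)
    (hEstar : ∀ p : Fin n → ℝ,
      Estar p = sSup {y : ℝ | ∃ u : Fin n → ℝ, y = ∑ i, p i * u i - E u})
    (β : ℝ) (hβ : 0 < β)
    (hsc : ∀ p ∈ {p : Fin n → ℝ | ∑ i, p i = 1 ∧ ∀ i, 0 ≤ p i},
      ∀ q ∈ {p : Fin n → ℝ | ∑ i, p i = 1 ∧ ∀ i, 0 ≤ p i},
      ∀ α ∈ Set.Icc (0 : ℝ) 1,
        Estar (α • p + (1 - α) • q)
          ≤ α * Estar p + (1 - α) * Estar q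
            - β / 2 * α * (1 - α) * (∑ i, |p i - q i|) ^ 2)
    (u : Fin n → ℝ)
    (pu : Fin n → ℝ)
    (hpu : ∀ i, pu i
      = (μ {x : Fin n → ℝ | ∀ j, u j + x j ≤ u i + x i}).toReal) :
    pu ∈ {p : Fin n → ℝ | ∑ i, p i = 1 ∧ ∀ i, 0 ≤ p i} ∧
    (∀ q ∈ {p : Fin n → ℝ | ∑ i, p i = 1 ∧ ∀ i, 0 ≤ p i},
      ∑ i, q i * u i - Estar q ≤ ∑ i, pu i * u i - Estar pu) ∧
    (∀ q ∈ {p : Fin n → ℝ | ∑ i, p i = 1 ∧ ∀ i, 0 ≤ p i}, q ≠ pu →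
      ∑ i, q i * u i - Estar q < ∑ i, pu i * u i - Estar pu) ∧
    E u = ∑ i, pu i * u i - Estar pu := by
  haveI : NeZero n := ⟨by omega⟩
  obtain ⟨hsum1, hsub⟩ := prox_core n hn μ hint hac E hE u pu hpu
  have hpu_nonneg : ∀ i, 0 ≤ pu i := fun i => by rw [hpu i]; exact ENNReal.toReal_nonneg
  have hpuΔ : pu ∈ {p : Fin n → ℝ | ∑ i, p i = 1 ∧ ∀ i, 0 ≤ p i} := ⟨hsum1, hpu_nonneg⟩
  set C : ℝ := ∑ i, ∫ x, |x i| ∂μ with hC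
  have hIntS : ∀ w : Fin n → ℝ, Integrable (fun x : Fin n → ℝ => ⨆ i, (w i + x i)) μ :=
    fun w => prox_integrable_sup μ hint w
  have habs_int : Integrable (fun x : Fin n → ℝ => ∑ i, |x i|) μ :=
    integrable_finset_sum _ fun i _ => (hint i).abs
  have hEv_lb : ∀ v : Fin n → ℝ, (⨆ i, v i) - C ≤ E v := by
    intro v
    have hptw : ∀ x : Fin n → ℝ, (⨆ i, v i) - ∑ i, |x i| ≤ ⨆ i, (v i + x i) := by
      intro x
      obtain ⟨i, hi, hieq⟩ := prox_sup_attained v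
      have h1 : v i + x i ≤ ⨆ j, (v j + x j) :=
        le_ciSup (f := fun j => v j + x j) (Set.Finite.bddAbove (Set.finite_range _)) i
      have h2 : |x i| ≤ ∑ j, |x j| :=
        Finset.single_le_sum (f := fun j => |x j|) (fun j _ => abs_nonneg _) (Finset.mem_univ i)
      have h3 : -|x i| ≤ x i := neg_abs_le _
      rw [hieq]
      linarith
    have hint2 : Integrable (fun x : Fin n → ℝ => (⨆ i, v i) - ∑ i, |x i|) μ :=
      (integrable_const _).sub habs_int
    have hm := integral_mono hint2 (hIntS v) hptw
    rw [hE v]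
    refine le_trans (le_of_eq ?_) hm
    rw [integral_sub (integrable_const _) habs_int, integral_const, Measure.real, measure_univ,
      integral_finset_sum _ (fun i _ => (hint i).abs)]
    simp [hC]
  have hub : ∀ q ∈ {p : Fin n → ℝ | ∑ i, p i = 1 ∧ ∀ i, 0 ≤ p i},
      ∀ y ∈ {y : ℝ | ∃ v : Fin n → ℝ, y = ∑ i, q i * v i - E v}, y ≤ C := by
    rintro q hq y ⟨v, rfl⟩
    have h1 : ∑ i, q i * v i ≤ ⨆ i, v i := by
      obtain ⟨i0, hi0, hieq⟩ := prox_sup_attained v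
      calc ∑ i, q i * v i ≤ ∑ i, q i * (⨆ j, v j) :=
            Finset.sum_le_sum fun i _ =>
              mul_le_mul_of_nonneg_left (hieq ▸ hi0 i) (hq.2 i)
        _ = ⨆ j, v j := by rw [← Finset.sum_mul, hq.1, one_mul]
    have h2 := hEv_lb v
    linarith
  have hbdd : ∀ q ∈ {p : Fin n → ℝ | ∑ i, p i = 1 ∧ ∀ i, 0 ≤ p i},
      BddAbove {y : ℝ | ∃ v : Fin n → ℝ, y = ∑ i, q i * v i - E v} :=
    fun q hq => ⟨C, fun y hy => hub q hq y hy⟩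
  have hne : ∀ q : Fin n → ℝ,
      ({y : ℝ | ∃ v : Fin n → ℝ, y = ∑ i, q i * v i - E v}).Nonempty :=
    fun q => ⟨_, ⟨u, rfl⟩⟩
  have hEstar_ge : ∀ q ∈ {p : Fin n → ℝ | ∑ i, p i = 1 ∧ ∀ i, 0 ≤ p i},
      ∑ i, q i * u i - E u ≤ Estar q := by
    intro q hq; rw [hEstar q]; exact le_csSup (hbdd q hq) ⟨u, rfl⟩
  have hsumdiff : ∀ v : Fin n → ℝ,
      ∑ i, pu i * v i - ∑ i, pu i * u i = ∑ i, pu i * (v i - u i) := by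
    intro v
    rw [← Finset.sum_sub_distrib]
    exact Finset.sum_congr rfl fun i _ => by ring
  have hEstar_pu : Estar pu = ∑ i, pu i * u i - E u := by
    rw [hEstar pu]
    apply le_antisymm
    · apply csSup_le (hne pu)
      rintro y ⟨v, rfl⟩
      have h1 := hsub v
      have h2 := hsumdiff v
      linarith
    · exact le_csSup (hbdd pu hpuΔ) ⟨u, rfl⟩
  have hfen : E u = ∑ i, pu i * u i - Estar pu := by rw [hEstar_pu]; ring
  have part2 : ∀ q ∈ {p : Fin n → ℝ | ∑ i, p i = 1 ∧ ∀ i, 0 ≤ p i},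
      ∑ i, q i * u i - Estar q ≤ ∑ i, pu i * u i - Estar pu := by
    intro q hq
    have h1 := hEstar_ge q hq
    rw [hEstar_pu]
    linarith
  refine ⟨hpuΔ, part2, ?_, hfen⟩
  intro q hq hqne
  by_contra hcon
  push_neg at hcon
  set d : ℝ := ∑ i, |q i - pu i| with hd
  have hd0 : 0 < d := by
    obtain ⟨i, hi⟩ := Function.ne_iff.mp hqne
    have h1 : 0 < |q i - pu i| := abs_pos.2 (sub_ne_zero.2 hi)
    have h2 : |q i - pu i| ≤ d :=
      Finset.single_le_sum (f := fun j => |q j - pu j|) (fun j _ => abs_nonneg _)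
        (Finset.mem_univ i)
    linarith
  have hmem : (1/2 : ℝ) ∈ Set.Icc (0:ℝ) 1 := by norm_num
  have hsc2 := hsc q hq pu hpuΔ (1/2) hmem
  set m : Fin n → ℝ := (1/2 : ℝ) • q + (1 - 1/2 : ℝ) • pu with hm
  have hmi : ∀ i, m i = (1/2) * q i + (1/2) * pu i := by
    intro i
    simp only [hm, Pi.add_apply, Pi.smul_apply, smul_eq_mul]
    norm_num
  have hmΔ : m ∈ {p : Fin n → ℝ | ∑ i, p i = 1 ∧ ∀ i, 0 ≤ p i} := by
    constructor
    · rw [Finset.sum_congr rfl fun i _ => hmi i, Finset.sum_add_distrib,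
        ← Finset.mul_sum, ← Finset.mul_sum, hq.1, hsum1]
      norm_num
    · intro i
      rw [hmi i]
      have h1 := hq.2 i
      have h2 := hpu_nonneg i
      linarith
  have hmle := part2 m hmΔ
  have hmsum : ∑ i, m i * u i = (1/2) * ∑ i, q i * u i + (1/2) * ∑ i, pu i * u i := by
    rw [Finset.mul_sum, Finset.mul_sum, ← Finset.sum_add_distrib]
    exact Finset.sum_congr rfl fun i _ => by rw [hmi i]; ring
  have hpos : 0 < β / 2 * (1/2) * (1 - 1/2) * d ^ 2 := by norm_num; positivity
  linarith [hsc2, hmle, hcon, hmsum, hpos]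
end
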